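/- Let σ : S → A and τ : T → A^⊥ be strong-receptive, courteous pre-∼-strategies between essps, where A is race-preserving and the isomorphism families of S and T contain receptive thin sub-symmetries. Then, forgetting polarities, the pullback S ⊛ T of σ and τ in the category of ess is also a bipullback: σ ∘ Π₁ ∼ τ ∘ Π₂, and for all maps of ess x : X → S and y : X → T with σ ∘ x ∼ τ ∘ y, there exists a map of ess h : X → S ⊛ T, unique up to ∼, such that Π₁ ∘ h ∼ x and Π₂ ∘ h ∼ y. -/

import Mathlib

set_option autoImplicit false
set_option maxHeartbeats 1000000

universe u

/-- An event structure. -/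
structure ES (E : Type u) where
  le : E → E → Prop
  le_refl : ∀ e, le e e
  le_trans : ∀ {a b c}, le a b → le b c → le a c
  le_antisymm : ∀ {a b}, le a b → le b a → a = b
  Con : Set (Set E)
  con_empty : (∅ : Set E) ∈ Con
  causes_finite : ∀ e, {e' | le e' e}.Finite
  con_finite : ∀ X ∈ Con, Set.Finite X
  con_singleton : ∀ e, ({e} : Set E) ∈ Con
  con_mono : ∀ {X Y : Set E}, Y ⊆ X → X ∈ Con → Y ∈ Con
  con_extend : ∀ {X : Set E} {e e' : E}, X ∈ Con → le e e' → e' ∈ X → X ∪ {e} ∈ Con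

variable {E F G H : Type u}

/-- Configurations: finite (via `Con`), consistent, down-closed subsets. -/
def Config (A : ES E) (x : Set E) : Prop :=
  x ∈ A.Con ∧ ∀ ⦃e : E⦄, e ∈ x → ∀ ⦃e' : E⦄, A.le e' e → e' ∈ x

/-- Covering: `x —⊂ e`. -/
def Cov (A : ES E) (x : Set E) (e : E) : Prop :=
  Config A x ∧ e ∉ x ∧ Config A (insert e x)

def ESlt (A : ES E) (e e' : E) : Prop := A.le e e' ∧ e ≠ e'

/-- Immediate causality `e ⋖ e'`. -/
def Imm (A : ES E) (e e' : E) : Prop :=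
  ESlt A e e' ∧ ∀ e'', ESlt A e e'' → ESlt A e'' e' → False

/-- Total maps of event structures. -/
def IsMap (A : ES E) (B : ES F) (f : E → F) : Prop :=
  (∀ x, Config A x → Config B (f '' x)) ∧
  (∀ x, Config A x → ∀ e ∈ x, ∀ e' ∈ x, f e = f e' → e = e')

def Rigid (A : ES E) (B : ES F) (f : E → F) : Prop :=
  IsMap A B f ∧ ∀ e e', A.le e e' → B.le (f e) (f e')

def OpenMap (A : ES E) (B : ES F) (f : E → F) : Prop :=
  Rigid A B f ∧ ∀ x y, Config A x → Config B y → f '' x ⊆ y →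
    ∃ x', Config A x' ∧ x ⊆ x' ∧ f '' x' = y

def ConflictFree (A : ES E) : Prop := ∀ X : Set E, X.Finite → X ∈ A.Con

def IsMinimal (A : ES E) (e : E) : Prop := ∀ e', A.le e' e → e' = e

/-- Event structures with polarities; `true` is Player/positive, `false` is Opponent/negative. -/
structure ESP (E : Type u) extends ES E where
  pol : E → Bool

def ESP.dual (A : ESP E) : ESP E := { toES := A.toES, pol := fun e => !A.pol e }

def IsESPMap (A : ESP E) (B : ESP F) (f : E → F) : Prop :=
  IsMap A.toES B.toES f ∧ ∀ e, B.pol (f e) = A.pol e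

def NegativeESP (A : ESP E) : Prop := ∀ e, IsMinimal A.toES e → A.pol e = false

/-- Single-threaded event structures. -/
def SingleThreaded (A : ES E) : Prop :=
  (∀ e, ∃! m, A.le m e ∧ IsMinimal A m) ∧
  (∀ x e₁ e₂, Cov A x e₁ → Cov A x e₂ → ¬ Config A (insert e₁ (insert e₂ x)) →
    ∃ m, A.le m e₁ ∧ A.le m e₂)

/- ## Relations as bijections between configurations -/

abbrev Rel2 (E : Type u) := Set (E × E)

def rdom (θ : Rel2 E) : Set E := Prod.fst '' θ
def rran (θ : Rel2 E) : Set E := Prod.snd '' θ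
def relBij (θ : Rel2 E) : Prop := ∀ p ∈ θ, ∀ q ∈ θ, (p.1 = q.1 ↔ p.2 = q.2)
def relId (x : Set E) : Rel2 E := (fun e => (e, e)) '' x
def relInv (θ : Rel2 E) : Rel2 E := Prod.swap '' θ
def relComp (θ θ' : Rel2 E) : Rel2 E := {p | ∃ b, (p.1, b) ∈ θ ∧ (b, p.2) ∈ θ'}
def relRestrict (θ : Rel2 E) (x : Set E) : Rel2 E := {p ∈ θ | p.1 ∈ x}
def relMap (f : E → F) (θ : Rel2 E) : Rel2 F := (Prod.map f f) '' θ

/-- Isomorphism families (without the polarity requirement). -/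
def IsIsoFamily (A : ES E) (S : Set (Rel2 E)) : Prop :=
  (∀ θ ∈ S, relBij θ ∧ Config A (rdom θ) ∧ Config A (rran θ)) ∧
  (∀ x, Config A x → relId x ∈ S) ∧
  (∀ θ ∈ S, relInv θ ∈ S) ∧
  (∀ θ ∈ S, ∀ θ' ∈ S, rran θ = rdom θ' → relComp θ θ' ∈ S) ∧
  (∀ θ ∈ S, ∀ x, Config A x → x ⊆ rdom θ → relRestrict θ x ∈ S) ∧
  (∀ θ ∈ S, ∀ x', Config A x' → rdom θ ⊆ x' → ∃ θ' ∈ S, θ ⊆ θ' ∧ rdom θ' = x')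

/-- The members of the family are polarity-preserving. -/
def PolPres (A : ESP E) (S : Set (Rel2 E)) : Prop :=
  ∀ θ ∈ S, ∀ p ∈ θ, A.pol p.1 = A.pol p.2

def FamPres (SA : Set (Rel2 E)) (SB : Set (Rel2 F)) (f : E → F) : Prop :=
  ∀ θ ∈ SA, relMap f θ ∈ SB

/-- `f ∼ g` : the two maps are symmetric. -/
def SymMaps (A : ES E) (SB : Set (Rel2 F)) (f g : E → F) : Prop :=
  ∀ x, Config A x → {p : F × F | ∃ a ∈ x, p = (f a, g a)} ∈ SB

/-- `θ ⊆⁺ θ'`. -/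
def PosRelExt (A : ESP E) (θ θ' : Rel2 E) : Prop :=
  θ ⊆ θ' ∧ ∀ p ∈ θ', p ∉ θ → A.pol p.1 = true ∧ A.pol p.2 = true

/-- `θ ⊆⁻ θ'`. -/
def NegRelExt (A : ESP E) (θ θ' : Rel2 E) : Prop :=
  θ ⊆ θ' ∧ ∀ p ∈ θ', p ∉ θ → A.pol p.1 = false ∧ A.pol p.2 = false

/-- `x ⊆⁺ x'` for configurations. -/
def PosSetExt (A : ESP E) (x x' : Set E) : Prop :=
  x ⊆ x' ∧ ∀ e ∈ x', e ∉ x → A.pol e = true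

def Courteous (S : ESP E) (A : ESP F) (σ : E → F) : Prop :=
  ∀ s₁ s₂, Imm S.toES s₁ s₂ → (S.pol s₁ = true ∨ S.pol s₂ = false) →
    Imm A.toES (σ s₁) (σ s₂)

def Receptive (S : ESP E) (A : ESP F) (σ : E → F) : Prop :=
  ∀ x a, Config S.toES x → Cov A.toES (σ '' x) a → A.pol a = false →
    ∃! s, Cov S.toES x s ∧ σ s = a

def StrongReceptive (S : ESP E) (SS : Set (Rel2 E)) (A : ESP F) (SA : Set (Rel2 F))
    (σ : E → F) : Prop :=
  ∀ θ ∈ SS, ∀ a₁ a₂ : F, A.pol a₁ = false → A.pol a₂ = false →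
    (a₁, a₂) ∉ relMap σ θ → insert (a₁, a₂) (relMap σ θ) ∈ SA →
    ∃! st : E × E, insert st θ ∈ SS ∧ σ st.1 = a₁ ∧ σ st.2 = a₂

/-- Thin: two positive compatible extensions of a member of the family are compatible. -/
def ThinFam (A : ESP E) (S : Set (Rel2 E)) : Prop :=
  ∀ θ ∈ S, ∀ θ₁ ∈ S, ∀ θ₂ ∈ S, PosRelExt A θ θ₁ → PosRelExt A θ θ₂ →
    Config A.toES (rdom θ₁ ∪ rdom θ₂) → θ₁ ∪ θ₂ ∈ S

/-- Race-preserving essp (family-level). -/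
def RacePresFam (A : ESP E) (S : Set (Rel2 E)) : Prop :=
  ∀ θ ∈ S, ∀ θ₁ ∈ S, ∀ θ₂ ∈ S, PosRelExt A θ θ₁ → NegRelExt A θ θ₂ →
    Config A.toES (rdom θ₁ ∪ rdom θ₂) → θ₁ ∪ θ₂ ∈ S

/-- Existence of receptive thin sub-symmetries of `A` and of `A^⊥`. -/
def HasThinReceptiveSubs (A : ESP E) (SA : Set (Rel2 E)) : Prop :=
  (∃ Sp ⊆ SA, IsIsoFamily A.toES Sp ∧
    (∀ θ ∈ Sp, ∀ θ' ∈ SA, NegRelExt A θ θ' → θ' ∈ Sp) ∧ ThinFam A Sp) ∧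
  (∃ Sm ⊆ SA, IsIsoFamily A.toES Sm ∧
    (∀ θ ∈ Sm, ∀ θ' ∈ SA, NegRelExt A.dual θ θ' → θ' ∈ Sm) ∧ ThinFam A.dual Sm)

/-- Thin concurrent games (family-level presentation). -/
def IsTCG (A : ESP E) (SA : Set (Rel2 E)) : Prop :=
  IsIsoFamily A.toES SA ∧ PolPres A SA ∧ RacePresFam A SA ∧ HasThinReceptiveSubs A SA

/-- ∼-strategies. -/
def IsSimStrategy (S : ESP E) (SS : Set (Rel2 E)) (A : ESP F) (SA : Set (Rel2 F))
    (σ : E → F) : Prop :=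
  IsESPMap S A σ ∧ FamPres SS SA σ ∧ IsIsoFamily S.toES SS ∧ PolPres S SS ∧
  Courteous S A σ ∧ StrongReceptive S SS A SA σ ∧ ThinFam S SS

/-- Weak equivalence of ∼-strategies on a common essp. -/
def WeakEquiv {S T GE : Type u} (PS : ESP S) (SS : Set (Rel2 S)) (PT : ESP T)
    (ST : Set (Rel2 T)) (SG : Set (Rel2 GE)) (σ : S → GE) (τ : T → GE) : Prop :=
  ∃ f : S → T, ∃ g : T → S,
    IsESPMap PS PT f ∧ FamPres SS ST f ∧ IsESPMap PT PS g ∧ FamPres ST SS g ∧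
    SymMaps PT.toES ST (f ∘ g) id ∧ SymMaps PS.toES SS (g ∘ f) id ∧
    SymMaps PS.toES SG (τ ∘ f) σ ∧ SymMaps PT.toES SG (σ ∘ g) τ

/- ## Stable families, primes, products, pullbacks -/

def FamLe (Fam : Set (Set E)) (x : Set E) (e e' : E) : Prop :=
  ∀ y ∈ Fam, y ⊆ x → e' ∈ y → e ∈ y

def FamPrime (Fam : Set (Set E)) (x : Set E) (e : E) : Set E :=
  {e' ∈ x | FamLe Fam x e' e}

def IsPrime (Fam : Set (Set E)) (p : Set E) : Prop :=
  ∃ x ∈ Fam, ∃ e ∈ x, p = FamPrime Fam x e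

/-- `e` is the generating (top) event of the prime `p`. -/
def PrRep (Fam : Set (Set E)) (p : Set E) (e : E) : Prop :=
  ∃ x ∈ Fam, e ∈ x ∧ p = FamPrime Fam x e

def PrimeLt (p q : Set E) : Prop := p ⊆ q ∧ p ≠ q

/-- Immediate causality in `Pr(Fam)`. -/
def PrImm (Fam : Set (Set E)) (p q : Set E) : Prop :=
  IsPrime Fam p ∧ IsPrime Fam q ∧ PrimeLt p q ∧
  ∀ r, IsPrime Fam r → PrimeLt p r → PrimeLt r q → False

/-- Configurations of `Pr(Fam)`. -/
def PrConfig (Fam : Set (Set E)) (z : Set (Set E)) : Prop :=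
  z.Finite ∧ (∀ p ∈ z, IsPrime Fam p) ∧
  (∀ p ∈ z, ∀ q, IsPrime Fam q → q ⊆ p → q ∈ z) ∧ ⋃₀ z ∈ Fam

/-- The product stable family `C(A) × C(B)`. -/
def ProdFam (A : ES E) (B : ES F) : Set (Set (E × F)) :=
  {x | x.Finite ∧ Config A (Prod.fst '' x) ∧ Config B (Prod.snd '' x) ∧
    (∀ p ∈ x, ∀ q ∈ x, p.1 = q.1 → p = q) ∧
    (∀ p ∈ x, ∀ q ∈ x, p.2 = q.2 → p = q) ∧
    (∀ p ∈ x, ∀ q ∈ x, p ≠ q → ∃ y ⊆ x,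
      Config A (Prod.fst '' y) ∧ Config B (Prod.snd '' y) ∧ (p ∈ y ↔ q ∉ y))}

/-- The stable family `(C(A) × C(B)) ↾ R` defining the pullback `A ⊛ B` of `f` and `g`. -/
def PbFam (A : ES E) (B : ES F) (f : E → G) (g : F → G) : Set (Set (E × F)) :=
  {x | x ∈ ProdFam A B ∧ ∀ p ∈ x, f p.1 = g p.2}

/- ## Secured bijections -/

def SecStep (A : ES E) (B : ES F) (θ : Set (E × F)) (p q : E × F) : Prop :=
  p ∈ θ ∧ q ∈ θ ∧ (A.le p.1 q.1 ∨ B.le p.2 q.2)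

def SecuredBij (A : ES E) (B : ES F) (f : E → G) (g : F → G) (θ : Set (E × F)) : Prop :=
  Config A (Prod.fst '' θ) ∧ Config B (Prod.snd '' θ) ∧
  (∀ p ∈ θ, ∀ q ∈ θ, (p.1 = q.1 ↔ p.2 = q.2)) ∧
  (∀ p ∈ θ, f p.1 = g p.2) ∧
  (∀ p q, Relation.TransGen (SecStep A B θ) p q → Relation.TransGen (SecStep A B θ) q p → p = q)

/- ## Parallel composition -/

def IsParES (A : ES E) (B : ES F) (P : ES (E ⊕ F)) : Prop :=
  (∀ e e', P.le e e' ↔ Sum.LiftRel A.le B.le e e') ∧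
  (∀ X, X ∈ P.Con ↔ X.Finite ∧ (Sum.inl ⁻¹' X) ∈ A.Con ∧ (Sum.inr ⁻¹' X) ∈ B.Con)

def IsParESP (A : ESP E) (B : ESP F) (P : ESP (E ⊕ F)) : Prop :=
  IsParES A.toES B.toES P.toES ∧
  (∀ a, P.pol (Sum.inl a) = A.pol a) ∧ (∀ b, P.pol (Sum.inr b) = B.pol b)

def parFam (SA : Set (Rel2 E)) (SB : Set (Rel2 F)) : Set (Rel2 (E ⊕ F)) :=
  {θ | ∃ θA ∈ SA, ∃ θB ∈ SB, θ = relMap Sum.inl θA ∪ relMap Sum.inr θB}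

/- ## Copycat -/

def ccPol (A : ESP E) (p : Bool × E) : Bool := cond p.1 (A.pol p.2) (!A.pol p.2)

def ccBase (A : ESP E) (p q : Bool × E) : Prop :=
  (p.1 = q.1 ∧ A.le p.2 q.2) ∨ (p.2 = q.2 ∧ p.1 ≠ q.1 ∧ ccPol A q = true)

def ccLe (A : ESP E) : Bool × E → Bool × E → Prop := Relation.ReflTransGen (ccBase A)

def ccDcl (A : ESP E) (X : Set (Bool × E)) : Set (Bool × E) := {p | ∃ q ∈ X, ccLe A p q}

def IsCopycatOf (A : ESP E) (CA : ESP (Bool × E)) : Prop :=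
  (∀ p q, CA.le p q ↔ ccLe A p q) ∧
  (∀ X, X ∈ CA.Con ↔ X.Finite ∧
    {a | (false, a) ∈ ccDcl A X} ∈ A.Con ∧ {a | (true, a) ∈ ccDcl A X} ∈ A.Con) ∧
  (∀ p, CA.pol p = ccPol A p)

def ccMap (f : E → F) : Bool × E → Bool × F := Prod.map id f

def ccToGame : Bool × E → E ⊕ E := fun p => cond p.1 (Sum.inr p.2) (Sum.inl p.2)

/- ## Symmetry presented as spans -/

def famOf (Et : ES F) (l r : F → E) : Set (Rel2 E) :=
  {θ | ∃ x, Config Et x ∧ θ = {p | ∃ aa ∈ x, p = (l aa, r aa)}}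

def IsSymSpanES (A : ES E) (Et : ES F) (l r : F → E) : Prop :=
  OpenMap Et A l ∧ OpenMap Et A r ∧
  (∀ aa aa', l aa = l aa' → r aa = r aa' → aa = aa') ∧
  (∀ x, Config A x → relId x ∈ famOf Et l r) ∧
  (∀ θ ∈ famOf Et l r, relInv θ ∈ famOf Et l r) ∧
  (∀ θ ∈ famOf Et l r, ∀ θ' ∈ famOf Et l r, rran θ = rdom θ' → relComp θ θ' ∈ famOf Et l r)

def IsSymSpanESP (A : ESP E) (Et : ESP F) (l r : F → E) : Prop :=
  IsSymSpanES A.toES Et.toES l r ∧ IsESPMap Et A l ∧ IsESPMap Et A r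

def MapPresRaces (S : ESP E) (A : ESP F) (f : E → F) : Prop :=
  ∀ x e₁ e₂, Cov S.toES x e₁ → Cov S.toES x e₂ →
    S.pol e₁ = false → S.pol e₂ = true →
    ¬ Config S.toES (insert e₁ (insert e₂ x)) →
    ¬ Config A.toES (insert (f e₁) (insert (f e₂) (f '' x)))

def ReflPosCompat (St : ESP F) (S : ES E) (l : F → E) : Prop :=
  ∀ x x₁ x₂, Config St.toES x → Config St.toES x₁ → Config St.toES x₂ →
    x ⊆ x₁ → x ⊆ x₂ →
    (∀ e ∈ x₁, e ∉ x → St.pol e = true) → (∀ e ∈ x₂, e ∉ x → St.pol e = true) →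
    Config S (l '' x₁ ∪ l '' x₂) → Config St.toES (x₁ ∪ x₂)

/- ## Higher symmetry -/

/-- The higher isomorphism family of an essp given by its family `SA`, at the level of
pairs of events: members correspond to commuting squares `φ' ∘ θ = θ' ∘ φ`. -/
def HigherFam (SA : Set (Rel2 E)) : Set (Rel2 (E × E)) :=
  {Φ | ∃ θ ∈ SA, ∃ θ' ∈ SA, ∃ φ ∈ SA, ∃ φ' ∈ SA,
    rdom φ = rdom θ ∧ rdom φ' = rran θ ∧ rran φ = rdom θ' ∧ rran φ' = rran θ' ∧
    (∀ a b c d, (a, b) ∈ θ → (a, c) ∈ φ → (b, d) ∈ φ' → (c, d) ∈ θ') ∧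
    Φ = {P | ∃ a b c d, (a, b) ∈ θ ∧ (a, c) ∈ φ ∧ (b, d) ∈ φ' ∧ P = ((a, b), (c, d))}}

/-- The higher isomorphism family, transported to the events of `Ã = Pr(SA)`,
i.e. primes of the stable family `SA`. -/
def LiftFam (SA : Set (Rel2 E)) : Set (Rel2 {p : Rel2 E // IsPrime SA p}) :=
  {Θ | ∃ θ ∈ SA, ∃ θ' ∈ SA, ∃ φ ∈ SA, ∃ φ' ∈ SA,
    rdom φ = rdom θ ∧ rdom φ' = rran θ ∧ rran φ = rdom θ' ∧ rran φ' = rran θ' ∧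
    (∀ a b c d, (a, b) ∈ θ → (a, c) ∈ φ → (b, d) ∈ φ' → (c, d) ∈ θ') ∧
    Θ = {P | ∃ a b c d, (a, b) ∈ θ ∧ (a, c) ∈ φ ∧ (b, d) ∈ φ' ∧
          P.1.1 = FamPrime SA θ (a, b) ∧ P.2.1 = FamPrime SA θ' (c, d)}}

/- ## Pullbacks as universal properties -/

def IsPullbackES {A B C P : Type u} (EP : ES P) (EA : ES A) (EB : ES B) (EC : ES C)
    (Pi1 : P → A) (Pi2 : P → B) (f : A → C) (g : B → C) : Prop :=
  IsMap EP EA Pi1 ∧ IsMap EP EB Pi2 ∧ f ∘ Pi1 = g ∘ Pi2 ∧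
  ∀ {X : Type u} (EX : ES X) (h₁ : X → A) (h₂ : X → B),
    IsMap EX EA h₁ → IsMap EX EB h₂ → f ∘ h₁ = g ∘ h₂ →
    ∃! h : X → P, IsMap EX EP h ∧ Pi1 ∘ h = h₁ ∧ Pi2 ∘ h = h₂

def IsPullbackESP {A B C P : Type u} (EP : ESP P) (EA : ESP A) (EB : ESP B) (EC : ESP C)
    (Pi1 : P → A) (Pi2 : P → B) (f : A → C) (g : B → C) : Prop :=
  IsESPMap EP EA Pi1 ∧ IsESPMap EP EB Pi2 ∧ f ∘ Pi1 = g ∘ Pi2 ∧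
  ∀ {X : Type u} (EX : ESP X) (h₁ : X → A) (h₂ : X → B),
    IsESPMap EX EA h₁ → IsESPMap EX EB h₂ → f ∘ h₁ = g ∘ h₂ →
    ∃! h : X → P, IsESPMap EX EP h ∧ Pi1 ∘ h = h₁ ∧ Pi2 ∘ h = h₂

/- ## Composition of strategies -/

def compLeft {S GA GB GC : Type u} (σ : S → GA ⊕ GB) : S ⊕ GC → (GA ⊕ GB) ⊕ GC :=
  Sum.map σ id

def compRight {T GA GB GC : Type u} (τ : T → GB ⊕ GC) : GA ⊕ T → (GA ⊕ GB) ⊕ GC :=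
  Sum.elim (fun a => Sum.inl (Sum.inl a))
    (fun t => Sum.elim (fun b => Sum.inl (Sum.inr b)) (fun c => Sum.inr c) (τ t))

def outAC {A B C : Type u} : (A ⊕ B) ⊕ C → Option (A ⊕ C) :=
  Sum.elim (Sum.elim (fun a => some (Sum.inl a)) (fun _ => none)) (fun c => some (Sum.inr c))

/-- Visible events of the interaction. -/
def VisE {S T GA GB GC : Type u} (σ : S → GA ⊕ GB) (e : (S ⊕ GC) × (GA ⊕ T)) : Prop :=
  (outAC (compLeft σ e.1)).isSome = true

/-- Visible primes of the interaction. -/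
def VisP {S T GA GB GC : Type u} (Fam : Set (Set ((S ⊕ GC) × (GA ⊕ T))))
    (σ : S → GA ⊕ GB) (p : Set ((S ⊕ GC) × (GA ⊕ T))) : Prop :=
  ∃ e, PrRep Fam p e ∧ VisE σ e

/-- The underlying relation of a bijection between configurations of `Pr(Fam)`. -/
def relUnder {P : Type u} (Fam : Set (Set P)) (Θ : Rel2 (Set P)) :
    Rel2 P :=
  {ee | ∃ pq ∈ Θ, PrRep Fam pq.1 ee.1 ∧ PrRep Fam pq.2 ee.2}

/-- The isomorphism family of the pullback `Pr(Fam)` of two ∼-strategies,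
characterised via the projections. -/
def PbSymFam {A B : Type u} (Fam : Set (Set (A × B))) (S1 : Set (Rel2 A))
    (S2 : Set (Rel2 B)) : Set (Rel2 (Set (A × B))) :=
  {Θ | relBij Θ ∧ PrConfig Fam (rdom Θ) ∧ PrConfig Fam (rran Θ) ∧
    relMap Prod.fst (relUnder Fam Θ) ∈ S1 ∧ relMap Prod.snd (relUnder Fam Θ) ∈ S2}

/-- A witness for the concrete composition `τ ⊙ σ` of strategies. -/
structure CompWitness {S T GA GB GC : Type u} (PS : ESP S) (PT : ESP T)
    (PA : ESP GA) (PC : ESP GC) (σ : S → GA ⊕ GB) (τ : T → GB ⊕ GC) where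
  L : ES (S ⊕ GC)
  R : ES (GA ⊕ T)
  hL : IsParES PS.toES PC.toES L
  hR : IsParES PA.toES PT.toES R
  Comp : ESP {p : Set ((S ⊕ GC) × (GA ⊕ T)) //
    VisP (PbFam L R (compLeft σ) (compRight τ)) σ p}
  hle : ∀ p q, Comp.le p q ↔ p.1 ⊆ q.1
  hcon : ∀ X, X ∈ Comp.Con ↔
    X.Finite ∧ ⋃₀ (Subtype.val '' X) ∈ PbFam L R (compLeft σ) (compRight τ)
  co : {p : Set ((S ⊕ GC) × (GA ⊕ T)) //
    VisP (PbFam L R (compLeft σ) (compRight τ)) σ p} → GA ⊕ GC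
  hco : ∀ p e, PrRep (PbFam L R (compLeft σ) (compRight τ)) p.1 e →
    outAC (compLeft σ e.1) = some (co p)
  hpol : ∀ p, Comp.pol p = Sum.elim (fun a => !PA.pol a) (fun c => PC.pol c) (co p)

/-- The isomorphism family of the composition: restriction to visible primes of the
family of the interaction. -/
def cfam {S T GA GB GC : Type u} {PS : ESP S} {PT : ESP T} {PA : ESP GA} {PC : ESP GC}
    {σ : S → GA ⊕ GB} {τ : T → GB ⊕ GC}
    (SS : Set (Rel2 S)) (ST : Set (Rel2 T)) (SA : Set (Rel2 GA)) (SC : Set (Rel2 GC))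
    (w : CompWitness PS PT PA PC σ τ) :
    Set (Rel2 {p : Set ((S ⊕ GC) × (GA ⊕ T)) //
      VisP (PbFam w.L w.R (compLeft σ) (compRight τ)) σ p}) :=
  {Θ | ∃ Φ ∈ PbSymFam (PbFam w.L w.R (compLeft σ) (compRight τ))
      (parFam SS SC) (parFam SA ST),
    relMap Subtype.val Θ =
      {pq ∈ Φ | VisP (PbFam w.L w.R (compLeft σ) (compRight τ)) σ pq.1 ∧
                VisP (PbFam w.L w.R (compLeft σ) (compRight τ)) σ pq.2}}
/-- The isomorphism family of the pullback of two ∼-strategies. -/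
def famP {SE TE AE : Type u} (ES1 : ES SE) (ES2 : ES TE) (σ : SE → AE) (τ : TE → AE)
    (SS : Set (Rel2 SE)) (ST : Set (Rel2 TE))
    (P : ES {p : Set (SE × TE) // IsPrime (PbFam ES1 ES2 σ τ) p})
    (Pi1 : {p : Set (SE × TE) // IsPrime (PbFam ES1 ES2 σ τ) p} → SE)
    (Pi2 : {p : Set (SE × TE) // IsPrime (PbFam ES1 ES2 σ τ) p} → TE) :
    Set (Rel2 {p : Set (SE × TE) // IsPrime (PbFam ES1 ES2 σ τ) p}) :=
  {Θ | relBij Θ ∧ Config P (rdom Θ) ∧ Config P (rran Θ) ∧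
    relMap Pi1 Θ ∈ SS ∧ relMap Pi2 Θ ∈ ST}


/- ## Auxiliary machinery for statement 14 -/

section Aux14

open Set

variable {X E F SE TE AE : Type u}

/-- The graph of a pair of functions on a set. -/
def pairSet {F' : Type u} (f : X → E) (g : X → F') (w : Set X) : Set (E × F') :=
  (fun a => (f a, g a)) '' w

lemma pairSet_eq_setOf {F' : Type u} (f : X → E) (g : X → F') (w : Set X) :
    {p : E × F' | ∃ a ∈ w, p = (f a, g a)} = pairSet f g w := by
  ext p
  constructor
  · rintro ⟨a, ha, rfl⟩; exact ⟨a, ha, rfl⟩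
  · rintro ⟨a, ha, rfl⟩; exact ⟨a, ha, rfl⟩

lemma mem_pairSet {F' : Type u} {f : X → E} {g : X → F'} {w : Set X} {p : E × F'} :
    p ∈ pairSet f g w ↔ ∃ a ∈ w, (f a, g a) = p := Set.mem_image _ _ _

lemma mem_pairSet' {F' : Type u} {f : X → E} {g : X → F'} {w : Set X} {a : X}
    (ha : a ∈ w) : (f a, g a) ∈ pairSet f g w := ⟨a, ha, rfl⟩

lemma pairSet_mono {F' : Type u} {f : X → E} {g : X → F'} {w w' : Set X} (h : w' ⊆ w) :
    pairSet f g w' ⊆ pairSet f g w := Set.image_mono h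

lemma rdom_pairSet (f g : X → E) (w : Set X) : rdom (pairSet f g w) = f '' w := by
  simp only [rdom, pairSet, Set.image_image]

lemma rran_pairSet (f g : X → E) (w : Set X) : rran (pairSet f g w) = g '' w := by
  simp only [rran, pairSet, Set.image_image]

lemma fst_pairSet {F' : Type u} (f : X → E) (g : X → F') (w : Set X) :
    Prod.fst '' (pairSet f g w) = f '' w := by
  simp only [pairSet, Set.image_image]

lemma snd_pairSet {F' : Type u} (f : X → E) (g : X → F') (w : Set X) :
    Prod.snd '' (pairSet f g w) = g '' w := by
  simp only [pairSet, Set.image_image]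

lemma relInv_pairSet (f g : X → E) (w : Set X) :
    relInv (pairSet f g w) = pairSet g f w := by
  simp only [relInv, pairSet, Set.image_image]; rfl

lemma relMap_pairSet (φ : E → F) (f g : X → E) (w : Set X) :
    relMap φ (pairSet f g w) = pairSet (fun a => φ (f a)) (fun a => φ (g a)) w := by
  simp only [relMap, pairSet, Set.image_image]; rfl

lemma relId_eq_pairSet (v : Set E) : relId v = pairSet id id v := rfl

lemma rdom_relId (v : Set E) : rdom (relId v) = v := by
  simp only [relId, rdom, Set.image_image]; exact Set.image_id v

lemma rran_relId (v : Set E) : rran (relId v) = v := by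
  simp only [relId, rran, Set.image_image]; exact Set.image_id v

lemma mem_relId {v : Set E} {p : E × E} : p ∈ relId v ↔ p.1 ∈ v ∧ p.2 = p.1 := by
  constructor
  · rintro ⟨e, he, rfl⟩; exact ⟨he, rfl⟩
  · rintro ⟨h1, h2⟩
    exact ⟨p.1, h1, by
      have : p = (p.1, p.1) := by rw [Prod.ext_iff]; exact ⟨rfl, h2⟩
      rw [this]⟩

lemma relMap_relId (φ : E → F) (v : Set E) :
    relMap φ (relId v) = relId (φ '' v) := by
  simp only [relMap, relId, Set.image_image]; rfl

lemma relId_insert (e : E) (v : Set E) :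
    relId (insert e v) = insert (e, e) (relId v) := by
  simp only [relId, Set.image_insert_eq]

lemma rdom_insert (p : E × E) (θ : Rel2 E) :
    rdom (insert p θ) = insert p.1 (rdom θ) := by
  simp only [rdom, Set.image_insert_eq]

lemma rran_insert (p : E × E) (θ : Rel2 E) :
    rran (insert p θ) = insert p.2 (rran θ) := by
  simp only [rran, Set.image_insert_eq]

lemma mem_rdom {θ : Rel2 E} {u : E} : u ∈ rdom θ ↔ ∃ v, (u, v) ∈ θ := by
  constructor
  · rintro ⟨⟨u', v⟩, hp, rfl⟩; exact ⟨v, hp⟩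
  · rintro ⟨v, hv⟩; exact ⟨(u, v), hv, rfl⟩

lemma mem_rran {θ : Rel2 E} {v : E} : v ∈ rran θ ↔ ∃ u, (u, v) ∈ θ := by
  constructor
  · rintro ⟨⟨u, v'⟩, hp, rfl⟩; exact ⟨u, hp⟩
  · rintro ⟨u, hu⟩; exact ⟨(u, v), hu, rfl⟩

lemma mem_rdom_of_mem {θ : Rel2 E} {p : E × E} (hp : p ∈ θ) : p.1 ∈ rdom θ :=
  ⟨p, hp, rfl⟩

lemma mem_rran_of_mem {θ : Rel2 E} {p : E × E} (hp : p ∈ θ) : p.2 ∈ rran θ :=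
  ⟨p, hp, rfl⟩

lemma mem_relMap {φ : E → F} {θ : Rel2 E} {q : F × F} :
    q ∈ relMap φ θ ↔ ∃ p ∈ θ, (φ p.1, φ p.2) = q := by
  constructor
  · rintro ⟨p, hp, rfl⟩; exact ⟨p, hp, rfl⟩
  · rintro ⟨p, hp, rfl⟩; exact ⟨p, hp, rfl⟩

lemma mem_relMap_of_mem {φ : E → F} {θ : Rel2 E} {p : E × E} (hp : p ∈ θ) :
    (φ p.1, φ p.2) ∈ relMap φ θ := ⟨p, hp, rfl⟩

lemma rdom_relMap (φ : E → F) (θ : Rel2 E) : rdom (relMap φ θ) = φ '' rdom θ := by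
  simp only [rdom, relMap, Set.image_image]; rfl

lemma rran_relMap (φ : E → F) (θ : Rel2 E) : rran (relMap φ θ) = φ '' rran θ := by
  simp only [rran, relMap, Set.image_image]; rfl

lemma relMap_insert (φ : E → F) (p : E × E) (θ : Rel2 E) :
    relMap φ (insert p θ) = insert (φ p.1, φ p.2) (relMap φ θ) := by
  simp only [relMap, Set.image_insert_eq]; rfl

lemma rdom_relInv (θ : Rel2 E) : rdom (relInv θ) = rran θ := by
  simp only [rdom, rran, relInv, Set.image_image]; rfl

lemma rran_relInv (θ : Rel2 E) : rran (relInv θ) = rdom θ := by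
  simp only [rdom, rran, relInv, Set.image_image]; rfl

lemma mem_relInv {θ : Rel2 E} {p : E × E} : p ∈ relInv θ ↔ (p.2, p.1) ∈ θ := by
  constructor
  · rintro ⟨⟨u, v⟩, hp, rfl⟩; exact hp
  · intro hp; exact ⟨(p.2, p.1), hp, rfl⟩

lemma mem_relComp {θ θ' : Rel2 E} {p : E × E} :
    p ∈ relComp θ θ' ↔ ∃ b, (p.1, b) ∈ θ ∧ (b, p.2) ∈ θ' := Iff.rfl

lemma mem_relRestrict {θ : Rel2 E} {v : Set E} {p : E × E} :
    p ∈ relRestrict θ v ↔ p ∈ θ ∧ p.1 ∈ v := Iff.rfl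

lemma relRestrict_subset (θ : Rel2 E) (v : Set E) : relRestrict θ v ⊆ θ :=
  fun _ hp => hp.1

lemma rdom_relRestrict {θ : Rel2 E} {v : Set E} (h : v ⊆ rdom θ) :
    rdom (relRestrict θ v) = v := by
  apply Set.Subset.antisymm
  · rintro u hu
    rw [mem_rdom] at hu
    obtain ⟨s, hs, hv⟩ := hu
    exact hv
  · intro u hu
    obtain ⟨s, hs⟩ := mem_rdom.1 (h hu)
    exact mem_rdom.2 ⟨s, hs, hu⟩

/-- A member of an isomorphism family is functional from left to right. -/
lemma relBij_right_unique {θ : Rel2 E} (hb : relBij θ) {u v v' : E}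
    (h1 : (u, v) ∈ θ) (h2 : (u, v') ∈ θ) : v = v' :=
  (hb (u, v) h1 (u, v') h2).1 rfl

lemma relBij_left_unique {θ : Rel2 E} (hb : relBij θ) {u u' v : E}
    (h1 : (u, v) ∈ θ) (h2 : (u', v) ∈ θ) : u = u' :=
  (hb (u, v) h1 (u', v) h2).2 rfl

end Aux14


section Aux14b

open Set

variable {X E F SE TE AE : Type u}

lemma config_empty (A : ES E) : Config A (∅ : Set E) :=
  ⟨A.con_empty, fun e he => absurd he (Set.notMem_empty e)⟩

lemma config_finite {A : ES E} {w : Set E} (hw : Config A w) : w.Finite :=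
  A.con_finite w hw.1

/-- Down-closures of single events are configurations. -/
lemma config_downset (A : ES E) (a : E) : Config A {e | A.le e a} := by
  constructor
  · -- consistency, by adding events below `a` one at a time
    have hfin : {e | A.le e a}.Finite := A.causes_finite a
    have key : ∀ n : ℕ, ∀ s : Set E, s ⊆ {e | A.le e a} → a ∈ s → s ∈ A.Con →
        ({e | A.le e a} \ s).ncard = n → {e | A.le e a} ∈ A.Con := by
      intro n
      induction n using Nat.strong_induction_on with
      | _ n ih =>
        intro s hsub has hcon hcard
        by_cases hds : {e | A.le e a} ⊆ s
        · have : {e | A.le e a} = s := Set.Subset.antisymm hds hsub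
          rw [this]; exact hcon
        · obtain ⟨e, he, hes⟩ := Set.not_subset.1 hds
          have hcon' : s ∪ {e} ∈ A.Con := A.con_extend hcon he has
          have hsub' : s ∪ {e} ⊆ {e | A.le e a} := by
            intro c hc
            rcases hc with hc | hc
            · exact hsub hc
            · rw [Set.mem_singleton_iff] at hc; rw [hc]; exact he
          have hmem : e ∈ {e | A.le e a} \ s := ⟨he, hes⟩
          have hfin' : ({e | A.le e a} \ s).Finite := hfin.diff
          have hlt : (({e | A.le e a} \ s) \ {e}).ncard < ({e | A.le e a} \ s).ncard :=
            Set.ncard_diff_singleton_lt_of_mem hmem hfin'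
          have heq : {e | A.le e a} \ (s ∪ {e}) = ({e | A.le e a} \ s) \ {e} := by
            ext c; simp only [Set.mem_diff, Set.mem_union, Set.mem_singleton_iff]; tauto
          rw [hcard] at hlt
          exact ih _ (heq ▸ hlt) (s ∪ {e}) hsub' (Set.mem_union_left _ has) hcon' rfl
    have hsub0 : ({a} : Set E) ⊆ {e | A.le e a} := by
      intro c hc
      rw [Set.mem_singleton_iff] at hc
      rw [hc]
      exact Set.mem_setOf.2 (A.le_refl a)
    exact key _ {a} hsub0 (Set.mem_singleton a) (A.con_singleton a) rfl
  · intro e he e' hle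
    exact Set.mem_setOf.2 (A.le_trans hle (Set.mem_setOf.1 he))

lemma mem_downset_self (A : ES E) (a : E) : a ∈ {e | A.le e a} :=
  Set.mem_setOf.2 (A.le_refl a)

lemma downset_subset_config {A : ES E} {w : Set E} (hw : Config A w) {a : E} (ha : a ∈ w) :
    {e | A.le e a} ⊆ w := fun _ hc => hw.2 ha (Set.mem_setOf.1 hc)

/-- Finite nonempty sets have maximal elements. -/
lemma exists_max_in (A : ES E) {w : Set E} (hfin : w.Finite) (hne : w.Nonempty) :
    ∃ a ∈ w, ∀ b ∈ w, A.le a b → a = b := by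
  revert hne
  refine Set.Finite.induction_on w hfin ?_ ?_
  · intro hne; exact absurd hne (Set.not_nonempty_empty)
  · rintro c s hcs hsfin ih -

    by_cases hse : s.Nonempty
    · obtain ⟨a, has, hamax⟩ := ih hse
      by_cases hac : A.le a c
      · refine ⟨c, Set.mem_insert _ _, ?_⟩
        intro b hb hcb
        rcases hb with hb | hb
        · exact hb.symm
        · have hab : A.le a b := A.le_trans hac hcb
          have : a = b := hamax b hb hab
          rw [← this] at hcb
          exact (A.le_antisymm hcb hac).trans this
      · refine ⟨a, Set.mem_insert_of_mem _ has, ?_⟩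
        intro b hb hab
        rcases hb with hb | hb
        · rw [hb] at hab; exact absurd hab hac
        · exact hamax b hb hab
    · rw [Set.not_nonempty_iff_eq_empty] at hse
      subst hse
      refine ⟨c, Set.mem_insert _ _, ?_⟩
      intro b hb _
      rcases hb with hb | hb
      · exact hb.symm
      · exact absurd hb (Set.notMem_empty b)

/-- Removing a maximal element from a configuration yields a configuration. -/
lemma config_diff_max {A : ES E} {w : Set E} (hw : Config A w) {a : E}
    (hmax : ∀ b ∈ w, A.le a b → a = b) : Config A (w \ {a}) := by
  constructor
  · exact A.con_mono Set.diff_subset hw.1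
  · intro e he e' hle
    have he'w : e' ∈ w := hw.2 he.1 hle
    refine ⟨he'w, ?_⟩
    intro hc
    rw [Set.mem_singleton_iff] at hc
    subst hc
    have : e' = e := hmax e he.1 hle
    exact he.2 (by rw [← this]; rfl)

lemma insert_diff_self_of_mem' {w : Set X} {a : X} (ha : a ∈ w) :
    w = insert a (w \ {a}) := by
  rw [Set.insert_diff_singleton]
  exact (Set.insert_eq_self.2 ha).symm

/-- Separation of two distinct events of a configuration by a sub-configuration. -/
lemma sep_config {A : ES E} {w : Set E} (hw : Config A w) {a b : E}
    (ha : a ∈ w) (hb : b ∈ w) (hab : a ≠ b) :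
    ∃ z, z ⊆ w ∧ Config A z ∧ (a ∈ z ↔ b ∉ z) := by
  by_cases hba : A.le b a
  · -- then ¬ A.le a b, use the down-closure of b in w
    refine ⟨{c ∈ w | A.le c b}, fun c hc => hc.1, ⟨?_, ?_⟩, ?_⟩
    · exact A.con_mono (fun c hc => hc.1) hw.1
    · intro e he e' hle
      exact ⟨hw.2 he.1 hle, A.le_trans hle he.2⟩
    · have hbz : b ∈ {c ∈ w | A.le c b} := ⟨hb, A.le_refl b⟩
      have haz : a ∉ {c ∈ w | A.le c b} := by
        intro hc
        exact hab (A.le_antisymm hc.2 hba)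
      simp only [haz, hbz]
      tauto
  · refine ⟨{c ∈ w | A.le c a}, fun c hc => hc.1, ⟨?_, ?_⟩, ?_⟩
    · exact A.con_mono (fun c hc => hc.1) hw.1
    · intro e he e' hle
      exact ⟨hw.2 he.1 hle, A.le_trans hle he.2⟩
    · have haz : a ∈ {c ∈ w | A.le c a} := ⟨ha, A.le_refl a⟩
      have hbz : b ∉ {c ∈ w | A.le c a} := fun hc => hba hc.2
      simp only [haz, hbz]
      tauto

/-- Strong receptivity implies receptivity. -/
lemma receptive_of_strong {S : ESP SE} {SS : Set (Rel2 SE)} {G : ESP AE}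
    {SA : Set (Rel2 AE)} {σ : SE → AE}
    (hSS : IsIsoFamily S.toES SS)
    (hSAid : ∀ v, Config G.toES v → relId v ∈ SA)
    (hσr : StrongReceptive S SS G SA σ) : Receptive S G σ := by
  intro v a hv hcov hpol
  have hIdv : relId v ∈ SS := hSS.2.1 v hv
  have hnm : (a, a) ∉ relMap σ (relId v) := by
    rw [relMap_relId]
    intro hc
    rw [mem_relId] at hc
    exact hcov.2.1 hc.1
  have hins : insert (a, a) (relMap σ (relId v)) ∈ SA := by
    rw [relMap_relId, ← relId_insert]
    exact hSAid _ hcov.2.2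
  obtain ⟨⟨s₁, s₂⟩, ⟨hmem, hs1, hs2⟩, huniq⟩ := hσr (relId v) hIdv a a hpol hpol hnm hins
  have hswap : (s₂, s₁) = (s₁, s₂) := by
    apply huniq
    refine ⟨?_, hs2, hs1⟩
    have : insert (s₂, s₁) (relId v) = relInv (insert (s₁, s₂) (relId v)) := by
      have h1 : relInv (insert (s₁, s₂) (relId v)) =
          insert ((s₁, s₂).swap) (relInv (relId v)) := by
        simp only [relInv, Set.image_insert_eq]
      rw [h1]
      have h2 : relInv (relId v) = relId v := by
        simp only [relInv, relId, Set.image_image]; rfl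
      rw [h2]; rfl
    rw [this]
    exact hSS.2.2.1 _ hmem
  have hss : s₁ = s₂ := by
    have := congrArg Prod.fst hswap; simpa using this.symm
  subst hss
  have hsv : s₁ ∉ v := by
    intro hc
    exact hcov.2.1 (hs1 ▸ Set.mem_image_of_mem σ hc)
  have hcovS : Cov S.toES v s₁ := by
    refine ⟨hv, hsv, ?_⟩
    have hd : rdom (insert (s₁, s₁) (relId v)) = insert s₁ v := by
      rw [rdom_insert, rdom_relId]
    have := (hSS.1 _ hmem).2.1
    rw [hd] at this
    exact this
  refine ⟨s₁, ⟨hcovS, hs1⟩, ?_⟩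
  intro s' ⟨hcov', hσ'⟩
  have hmem' : insert (s', s') (relId v) ∈ SS := by
    rw [← relId_insert]
    exact hSS.2.1 _ hcov'.2.2
  have := huniq (s', s') ⟨hmem', hσ', hσ'⟩
  exact (congrArg Prod.fst this)

end Aux14b


section Aux14c

open Set

variable {X E SE TE AE : Type u}

lemma config_inter {A : ES E} {u v : Set E} (hu : Config A u) (hv : Config A v) :
    Config A (u ∩ v) := by
  constructor
  · exact A.con_mono Set.inter_subset_left hu.1
  · intro e he e' hle
    exact ⟨hu.2 he.1 hle, hv.2 he.2 hle⟩

lemma image_fst_inter {z y w : Set (SE × TE)}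
    (hinj : ∀ p ∈ z, ∀ q ∈ z, p.1 = q.1 → p = q) (hy : y ⊆ z) (hw : w ⊆ z) :
    Prod.fst '' (y ∩ w) = (Prod.fst '' y) ∩ (Prod.fst '' w) := by
  apply Set.Subset.antisymm
  · rintro u ⟨p, hp, rfl⟩
    exact ⟨⟨p, hp.1, rfl⟩, ⟨p, hp.2, rfl⟩⟩
  · rintro u ⟨⟨p, hp, rfl⟩, ⟨q, hq, hqu⟩⟩
    have : q = p := hinj q (hw hq) p (hy hp) hqu
    subst this
    exact ⟨q, ⟨hp, hq⟩, rfl⟩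

lemma image_snd_inter {z y w : Set (SE × TE)}
    (hinj : ∀ p ∈ z, ∀ q ∈ z, p.2 = q.2 → p = q) (hy : y ⊆ z) (hw : w ⊆ z) :
    Prod.snd '' (y ∩ w) = (Prod.snd '' y) ∩ (Prod.snd '' w) := by
  apply Set.Subset.antisymm
  · rintro u ⟨p, hp, rfl⟩
    exact ⟨⟨p, hp.1, rfl⟩, ⟨p, hp.2, rfl⟩⟩
  · rintro u ⟨⟨p, hp, rfl⟩, ⟨q, hq, hqu⟩⟩
    have : q = p := hinj q (hw hq) p (hy hp) hqu
    subst this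
    exact ⟨q, ⟨hp, hq⟩, rfl⟩

variable {E1 : ES SE} {E2 : ES TE} {f : SE → AE} {g : TE → AE}

/-- Subsets of members of `PbFam` with configuration projections are members. -/
lemma pb_subset_mem {z w : Set (SE × TE)} (hz : z ∈ PbFam E1 E2 f g) (hwz : w ⊆ z)
    (h1 : Config E1 (Prod.fst '' w)) (h2 : Config E2 (Prod.snd '' w)) :
    w ∈ PbFam E1 E2 f g := by
  obtain ⟨⟨hfin, hc1, hc2, hinj1, hinj2, hsep⟩, hfg⟩ := hz
  refine ⟨⟨hfin.subset hwz, h1, h2, ?_, ?_, ?_⟩, fun p hp => hfg p (hwz hp)⟩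
  · exact fun p hp q hq h => hinj1 p (hwz hp) q (hwz hq) h
  · exact fun p hp q hq h => hinj2 p (hwz hp) q (hwz hq) h
  · intro p hp q hq hpq
    obtain ⟨y, hy, hcy1, hcy2, hiff⟩ := hsep p (hwz hp) q (hwz hq) hpq
    refine ⟨y ∩ w, Set.inter_subset_right, ?_, ?_, ?_⟩
    · rw [image_fst_inter hinj1 hy hwz]
      exact config_inter hcy1 h1
    · rw [image_snd_inter hinj2 hy hwz]
      exact config_inter hcy2 h2
    · constructor
      · intro hpyw
        intro hqyw
        exact (hiff.1 hpyw.1) hqyw.1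
      · intro hqyw
        exact ⟨hiff.2 (fun hqy => hqyw ⟨hqy, hq⟩), hp⟩

lemma pb_inter_mem {y w z : Set (SE × TE)} (hy : y ∈ PbFam E1 E2 f g)
    (hw : w ∈ PbFam E1 E2 f g) (hz : z ∈ PbFam E1 E2 f g)
    (hyz : y ⊆ z) (hwz : w ⊆ z) : y ∩ w ∈ PbFam E1 E2 f g := by
  refine pb_subset_mem hz (fun p hp => hyz hp.1) ?_ ?_
  · rw [image_fst_inter hz.1.2.2.2.1 hyz hwz]
    exact config_inter hy.1.2.1 hw.1.2.1
  · rw [image_snd_inter hz.1.2.2.2.2.1 hyz hwz]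
    exact config_inter hy.1.2.2.1 hw.1.2.2.1

section FamGeneric
variable {P : Type u} {Fam : Set (Set P)}

lemma mem_famPrime_self {x : Set P} {e : P} (he : e ∈ x) : e ∈ FamPrime Fam x e :=
  ⟨he, fun _ _ _ hey => hey⟩

lemma famPrime_subset {x : Set P} {e : P} : FamPrime Fam x e ⊆ x := fun _ hp => hp.1

lemma famLe_of_subset {w z : Set P} (hwz : w ⊆ z) {a b : P} (h : FamLe Fam z a b) :
    FamLe Fam w a b := fun y hy hyw => h y hy (hyw.trans hwz)

lemma famPrime_subset_of_mem {w z : Set P} (hw : w ∈ Fam) (hwz : w ⊆ z) {e : P}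
    (he : e ∈ w) : FamPrime Fam z e ⊆ w := fun _ hp => hp.2 w hw hwz he

end FamGeneric

/-- Primes are computed the same in nested configurations. -/
lemma famPrime_trans {w z : Set (SE × TE)} (hw : w ∈ PbFam E1 E2 f g)
    (hz : z ∈ PbFam E1 E2 f g) (hwz : w ⊆ z) {e : SE × TE} (he : e ∈ w) :
    FamPrime (PbFam E1 E2 f g) w e = FamPrime (PbFam E1 E2 f g) z e := by
  apply Set.Subset.antisymm
  · intro p hp
    refine ⟨hwz hp.1, ?_⟩
    intro y hy hyz hey
    have hywm : y ∩ w ∈ PbFam E1 E2 f g := pb_inter_mem hy hw hz hyz hwz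
    have : p ∈ y ∩ w := hp.2 (y ∩ w) hywm Set.inter_subset_right ⟨hey, he⟩
    exact this.1
  · intro p hp
    exact ⟨famPrime_subset_of_mem hw hwz he hp, famLe_of_subset hwz hp.2⟩

lemma pb_famLe_antisymm {p : Set (SE × TE)} (hp : p ∈ PbFam E1 E2 f g) {e e' : SE × TE}
    (he : e ∈ p) (he' : e' ∈ p) (h1 : FamLe (PbFam E1 E2 f g) p e e')
    (h2 : FamLe (PbFam E1 E2 f g) p e' e) : e = e' := by
  by_contra hne
  obtain ⟨y, hy, hc1, hc2, hiff⟩ := hp.1.2.2.2.2.2 e he e' he' hne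
  have hyF : y ∈ PbFam E1 E2 f g := pb_subset_mem hp hy hc1 hc2
  by_cases he'y : e' ∈ y
  · have hey : e ∈ y := h1 y hyF hy he'y
    exact (hiff.1 hey) he'y
  · have hey : e ∈ y := hiff.2 he'y
    exact he'y (h2 y hyF hy hey)

/-- A prime with a given top, contained in a configuration, is the prime of that
configuration at the top; moreover tops are unique. -/
lemma pb_prime_eq_of_subset {q z : Set (SE × TE)} {x : Set (SE × TE)} {e : SE × TE}
    (hx : x ∈ PbFam E1 E2 f g) (hex : e ∈ x)
    (heq : q = FamPrime (PbFam E1 E2 f g) x e)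
    (hqF : q ∈ PbFam E1 E2 f g) (hz : z ∈ PbFam E1 E2 f g) (hqz : q ⊆ z) :
    q = FamPrime (PbFam E1 E2 f g) z e := by
  have heqmem : e ∈ q := heq ▸ mem_famPrime_self hex
  have hqx : q ⊆ x := heq ▸ famPrime_subset
  have t1 : FamPrime (PbFam E1 E2 f g) q e = FamPrime (PbFam E1 E2 f g) x e :=
    famPrime_trans hqF hx hqx heqmem
  have t2 : FamPrime (PbFam E1 E2 f g) q e = FamPrime (PbFam E1 E2 f g) z e :=
    famPrime_trans hqF hz hqz heqmem
  rw [← t2, t1, ← heq]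

lemma pb_top_unique {p x x' : Set (SE × TE)} {e e' : SE × TE}
    (hpF : p ∈ PbFam E1 E2 f g) (hx : x ∈ PbFam E1 E2 f g) (hx' : x' ∈ PbFam E1 E2 f g)
    (hex : e ∈ x) (hex' : e' ∈ x')
    (h1 : p = FamPrime (PbFam E1 E2 f g) x e) (h2 : p = FamPrime (PbFam E1 E2 f g) x' e') :
    e = e' := by
  have hep : e ∈ p := h1 ▸ mem_famPrime_self hex
  have he'p : e' ∈ p := h2 ▸ mem_famPrime_self hex'
  have hp1 : p = FamPrime (PbFam E1 E2 f g) p e :=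
    pb_prime_eq_of_subset hx hex h1 hpF hpF (le_refl p)
  have hp2 : p = FamPrime (PbFam E1 E2 f g) p e' :=
    pb_prime_eq_of_subset hx' hex' h2 hpF hpF (le_refl p)
  apply pb_famLe_antisymm hpF hep he'p
  · exact (hp2 ▸ hep).2
  · exact (hp1 ▸ he'p).2

end Aux14c


section Aux14d

open Set

variable {X SE TE AE : Type u}

/-- The invariant for the straightened pair of symmetries. -/
def MInv (Ssub : Set (Rel2 SE)) (Tsub : Set (Rel2 TE))
    (x : X → SE) (y : X → TE) (σ : SE → AE) (τ : TE → AE)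
    (w : Set X) (Φ : Rel2 SE) (Ψ : Rel2 TE) : Prop :=
  Φ ∈ Ssub ∧ Ψ ∈ Tsub ∧ rdom Φ = x '' w ∧ rdom Ψ = y '' w ∧
  ∀ a ∈ w, ∃ s t, (x a, s) ∈ Φ ∧ (y a, t) ∈ Ψ ∧ σ s = τ t

lemma minv_swap {Ssub : Set (Rel2 SE)} {Tsub : Set (Rel2 TE)}
    {x : X → SE} {y : X → TE} {σ : SE → AE} {τ : TE → AE}
    {w : Set X} {Φ : Rel2 SE} {Ψ : Rel2 TE} :
    MInv Ssub Tsub x y σ τ w Φ Ψ ↔ MInv Tsub Ssub y x τ σ w Ψ Φ := by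
  constructor
  · rintro ⟨h1, h2, h3, h4, h5⟩
    refine ⟨h2, h1, h4, h3, ?_⟩
    intro a ha
    obtain ⟨s, t, hs, ht, hst⟩ := h5 a ha
    exact ⟨t, s, ht, hs, hst.symm⟩
  · rintro ⟨h1, h2, h3, h4, h5⟩
    refine ⟨h2, h1, h4, h3, ?_⟩
    intro a ha
    obtain ⟨t, s, ht, hs, hst⟩ := h5 a ha
    exact ⟨s, t, hs, ht, hst.symm⟩

lemma minv_restrict {EX : ES X} {S : ESP SE} {T : ESP TE}
    {Ssub : Set (Rel2 SE)} {Tsub : Set (Rel2 TE)}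
    (hSsubI : IsIsoFamily S.toES Ssub) (hTsubI : IsIsoFamily T.toES Tsub)
    {x : X → SE} {y : X → TE} {σ : SE → AE} {τ : TE → AE}
    (hxmap : IsMap EX S.toES x) (hymap : IsMap EX T.toES y)
    {w w' : Set X} (hw' : Config EX w') (hsub : w' ⊆ w)
    {Φ : Rel2 SE} {Ψ : Rel2 TE}
    (hI : MInv Ssub Tsub x y σ τ w Φ Ψ) :
    MInv Ssub Tsub x y σ τ w' (relRestrict Φ (x '' w')) (relRestrict Ψ (y '' w')) := by
  obtain ⟨h1, h2, h3, h4, h5⟩ := hI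
  have hx' : x '' w' ⊆ rdom Φ := by rw [h3]; exact Set.image_mono (f := x) hsub
  have hy' : y '' w' ⊆ rdom Ψ := by rw [h4]; exact Set.image_mono (f := y) hsub
  refine ⟨hSsubI.2.2.2.2.1 Φ h1 _ (hxmap.1 _ hw') hx',
          hTsubI.2.2.2.2.1 Ψ h2 _ (hymap.1 _ hw') hy',
          rdom_relRestrict hx', rdom_relRestrict hy', ?_⟩
  intro a ha
  obtain ⟨s, t, hs, ht, hst⟩ := h5 a (hsub ha)
  exact ⟨s, t, ⟨hs, ⟨a, ha, rfl⟩⟩, ⟨ht, ⟨a, ha, rfl⟩⟩, hst⟩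

/-- One step of the straightening construction, where the new event is
negative in the game of the left strategy. -/
lemma step_lemma {EX : ES X} {S : ESP SE} {T : ESP TE} {G : ESP AE}
    {SS : Set (Rel2 SE)} {ST : Set (Rel2 TE)} {SA : Set (Rel2 AE)}
    {Ssub : Set (Rel2 SE)} {Tsub : Set (Rel2 TE)}
    (hSA : IsIsoFamily G.toES SA) (hpA : PolPres G SA)
    (hSSi : IsIsoFamily S.toES SS) (hSTi : IsIsoFamily T.toES ST)
    (hSsubSS : Ssub ⊆ SS)
    (hSsubNeg : ∀ θ ∈ Ssub, ∀ θ' ∈ SS, NegRelExt S θ θ' → θ' ∈ Ssub)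
    (hTsubST : Tsub ⊆ ST) (hTsubI : IsIsoFamily T.toES Tsub)
    {σ : SE → AE} {τ : TE → AE}
    (hσes : IsMap S.toES G.toES σ) (hσpol : ∀ e, G.pol (σ e) = S.pol e)
    (hσr : StrongReceptive S SS G SA σ)
    (hτes : IsMap T.toES G.toES τ) (hτfam : FamPres ST SA τ)
    {x : X → SE} {y : X → TE}
    (hxmap : IsMap EX S.toES x) (hymap : IsMap EX T.toES y)
    {w : Set X} (hw : Config EX w) {a : X} (ha : a ∈ w)
    (hw0 : Config EX (w \ {a}))
    (hθ : pairSet (fun b => σ (x b)) (fun b => τ (y b)) w ∈ SA)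
    (hpol : G.pol (σ (x a)) = false)
    {Φ₀ : Rel2 SE} {Ψ₀ : Rel2 TE}
    (hI : MInv Ssub Tsub x y σ τ (w \ {a}) Φ₀ Ψ₀) :
    ∃ Φ Ψ, MInv Ssub Tsub x y σ τ w Φ Ψ := by
  obtain ⟨hΦ₀sub, hΨ₀sub, hΦ₀dom, hΨ₀dom, hpair₀⟩ := hI
  have hwa : w = insert a (w \ {a}) := insert_diff_self_of_mem' ha
  have hxw : Config S.toES (x '' w) := hxmap.1 w hw
  have hxw0 : Config S.toES (x '' (w \ {a})) := hxmap.1 _ hw0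
  have hyw : Config T.toES (y '' w) := hymap.1 w hw
  have hxa0 : x a ∉ x '' (w \ {a}) := by
    rintro ⟨b, hb, hba⟩
    have : a = b := hxmap.2 w hw a ha b hb.1 hba.symm
    exact hb.2 (Set.mem_singleton_iff.2 this.symm)
  have hya0 : y a ∉ y '' (w \ {a}) := by
    rintro ⟨b, hb, hba⟩
    have : a = b := hymap.2 w hw a ha b hb.1 hba.symm
    exact hb.2 (Set.mem_singleton_iff.2 this.symm)
  have hximg : x '' w = insert (x a) (x '' (w \ {a})) := by
    conv_lhs => rw [hwa]
    rw [Set.image_insert_eq]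
  have hyimg : y '' w = insert (y a) (y '' (w \ {a})) := by
    conv_lhs => rw [hwa]
    rw [Set.image_insert_eq]
  -- extend Ψ₀ to a symmetry with domain y '' w, inside the thin sub-symmetry
  obtain ⟨Ψ', hΨ'sub, hΨ₀Ψ', hΨ'dom⟩ := hTsubI.2.2.2.2.2 Ψ₀ hΨ₀sub (y '' w) hyw
    (by rw [hΨ₀dom]; exact Set.image_mono (f := y) Set.diff_subset)
  have hΨ'ST : Ψ' ∈ ST := hTsubST hΨ'sub
  have hΨ'bij : relBij Ψ' := (hSTi.1 Ψ' hΨ'ST).1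
  have hΨ'ran : Config T.toES (rran Ψ') := (hSTi.1 Ψ' hΨ'ST).2.2
  have hya_dom : y a ∈ rdom Ψ' := by rw [hΨ'dom]; exact ⟨a, ha, rfl⟩
  obtain ⟨t_a, hta⟩ := mem_rdom.1 hya_dom
  have hta_not : t_a ∉ rran Ψ₀ := by
    intro hc
    obtain ⟨u, hu⟩ := mem_rran.1 hc
    have hu' : (u, t_a) ∈ Ψ' := hΨ₀Ψ' hu
    have huya : y a = u := relBij_left_unique hΨ'bij hta hu'
    have hum : u ∈ rdom Ψ₀ := ⟨(u, t_a), hu, rfl⟩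
    rw [hΨ₀dom] at hum
    rw [← huya] at hum
    exact hya0 hum
  have hranmono : rran Ψ₀ ⊆ rran Ψ' := Set.image_mono (f := Prod.snd) hΨ₀Ψ'
  have hτta : ∀ t', t' ∈ rran Ψ₀ → τ t' ≠ τ t_a := by
    intro t' ht' htt
    have h2 : t_a ∈ rran Ψ' := mem_rran_of_mem hta
    have : t' = t_a := hτes.2 (rran Ψ') hΨ'ran t' (hranmono ht') t_a h2 htt
    rw [this] at ht'
    exact hta_not ht'
  -- the composite symmetry of the game
  have hτΨ' : relMap τ Ψ' ∈ SA := hτfam Ψ' hΨ'ST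
  have hmatch : rran (pairSet (fun b => σ (x b)) (fun b => τ (y b)) w) =
      rdom (relMap τ Ψ') := by
    rw [rran_pairSet, rdom_relMap, hΨ'dom, Set.image_image]
  have hΩ : relComp (pairSet (fun b => σ (x b)) (fun b => τ (y b)) w)
      (relMap τ Ψ') ∈ SA := hSA.2.2.2.1 _ hθ _ hτΨ' hmatch
  have hΦ₀SS : Φ₀ ∈ SS := hSsubSS hΦ₀sub
  have hΦ₀bij : relBij Φ₀ := (hSSi.1 Φ₀ hΦ₀SS).1
  have hEQ : relComp (pairSet (fun b => σ (x b)) (fun b => τ (y b)) w) (relMap τ Ψ') =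
      insert (σ (x a), τ t_a) (relMap σ Φ₀) := by
    ext p
    obtain ⟨u, v⟩ := p
    constructor
    · rintro ⟨m, hum, hmv⟩
      obtain ⟨c, hc, hcu⟩ := mem_pairSet.1 hum
      have hcu1 : σ (x c) = u := congrArg Prod.fst hcu
      have hcu2 : τ (y c) = m := congrArg Prod.snd hcu
      obtain ⟨⟨p₁, p₂⟩, hp, hpm⟩ := mem_relMap.1 hmv
      have hp1 : τ p₁ = m := congrArg Prod.fst hpm
      have hp2 : τ p₂ = v := congrArg Prod.snd hpm
      have hp1dom : p₁ ∈ rdom Ψ' := ⟨(p₁, p₂), hp, rfl⟩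
      rw [hΨ'dom] at hp1dom
      obtain ⟨c', hc', hcc⟩ := hp1dom
      have hycc : y c' = y c := by
        apply hτes.2 (y '' w) hyw _ ⟨c', hc', rfl⟩ _ ⟨c, hc, rfl⟩
        rw [hcc, hp1, ← hcu2]
      have hp1yc : p₁ = y c := by rw [← hcc, hycc]
      by_cases hca : c = a
      · subst hca
        have hpt : p₂ = t_a := relBij_right_unique hΨ'bij (hp1yc ▸ hp) hta
        left
        rw [← hcu1, ← hp2, hpt]
      · have hc0 : c ∈ w \ {a} := ⟨hc, fun h => hca (Set.mem_singleton_iff.1 h)⟩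
        obtain ⟨s, t, hsΦ, htΨ, hst⟩ := hpair₀ c hc0
        have htΨ' : (y c, t) ∈ Ψ' := hΨ₀Ψ' htΨ
        have hpt : p₂ = t := relBij_right_unique hΨ'bij (hp1yc ▸ hp) htΨ'
        right
        have : (u, v) = (σ (x c), σ s) := by
          rw [← hcu1, ← hp2, hpt, hst]
        rw [this]
        exact mem_relMap_of_mem hsΦ
    · intro hins
      rcases hins with heq | hmem
      · have hq1 : u = σ (x a) := congrArg Prod.fst heq
        have hq2 : v = τ t_a := congrArg Prod.snd heq
        refine ⟨τ (y a), ?_, ?_⟩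
        · rw [hq1]; exact mem_pairSet' ha
        · rw [hq2]; exact mem_relMap_of_mem hta
      · obtain ⟨⟨p₁, p₂⟩, hpΦ, hpm⟩ := mem_relMap.1 hmem
        have hp1 : σ p₁ = u := congrArg Prod.fst hpm
        have hp2 : σ p₂ = v := congrArg Prod.snd hpm
        have hp1dom : p₁ ∈ rdom Φ₀ := ⟨(p₁, p₂), hpΦ, rfl⟩
        rw [hΦ₀dom] at hp1dom
        obtain ⟨c, hc, hcc⟩ := hp1dom
        obtain ⟨s, t, hsΦ, htΨ, hst⟩ := hpair₀ c hc
        have hps : p₂ = s := relBij_right_unique hΦ₀bij (hcc ▸ hpΦ) hsΦ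
        refine ⟨τ (y c), ?_, ?_⟩
        · have : u = σ (x c) := by rw [← hp1, ← hcc]
          rw [this]
          exact mem_pairSet' hc.1
        · have : v = τ t := by rw [← hp2, hps, hst]
          rw [this]
          exact mem_relMap_of_mem (hΨ₀Ψ' htΨ)
  have hnm : (σ (x a), τ t_a) ∉ relMap σ Φ₀ := by
    intro hc
    obtain ⟨⟨p₁, p₂⟩, hp, hpm⟩ := mem_relMap.1 hc
    have hp1 : σ p₁ = σ (x a) := congrArg Prod.fst hpm
    have hp1dom : p₁ ∈ rdom Φ₀ := ⟨(p₁, p₂), hp, rfl⟩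
    rw [hΦ₀dom] at hp1dom
    have hsub : x '' (w \ {a}) ⊆ x '' w := Set.image_mono (f := x) Set.diff_subset
    have : p₁ = x a := hσes.2 (x '' w) hxw p₁ (hsub hp1dom) (x a) ⟨a, ha, rfl⟩ hp1
    rw [this] at hp1dom
    exact hxa0 hp1dom
  have hpolβ : G.pol (τ t_a) = false := by
    have h := hpA _ hΩ (σ (x a), τ t_a) (by rw [hEQ]; exact Set.mem_insert _ _)
    rw [← h]
    exact hpol
  have hinsSA : insert (σ (x a), τ t_a) (relMap σ Φ₀) ∈ SA := hEQ ▸ hΩ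
  obtain ⟨⟨s₁, s₂⟩, ⟨hins, hσ1, hσ2⟩, _⟩ :=
    hσr Φ₀ hΦ₀SS (σ (x a)) (τ t_a) hpol hpolβ hnm hinsSA
  have hrec : Receptive S G σ := receptive_of_strong hSSi (fun v hv => hSA.2.1 v hv) hσr
  have hcovA : Cov G.toES (σ '' (x '' (w \ {a}))) (σ (x a)) := by
    refine ⟨hσes.1 _ hxw0, ?_, ?_⟩
    · rintro ⟨u, hu, huv⟩
      have hsub : x '' (w \ {a}) ⊆ x '' w := Set.image_mono (f := x) Set.diff_subset
      have : u = x a := hσes.2 (x '' w) hxw u (hsub hu) (x a) ⟨a, ha, rfl⟩ huv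
      rw [this] at hu
      exact hxa0 hu
    · have heq2 : insert (σ (x a)) (σ '' (x '' (w \ {a}))) = σ '' (x '' w) := by
        rw [hximg, Set.image_insert_eq]
      rw [heq2]
      exact hσes.1 _ hxw
  have hcov_xa : Cov S.toES (x '' (w \ {a})) (x a) := by
    refine ⟨hxw0, hxa0, ?_⟩
    have : insert (x a) (x '' (w \ {a})) = x '' w := hximg.symm
    rw [this]
    exact hxw
  have hMbij : relBij (insert (s₁, s₂) Φ₀) := (hSSi.1 _ hins).1
  have hs₁not : s₁ ∉ x '' (w \ {a}) := by
    rintro ⟨c, hc, hcs⟩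
    obtain ⟨s, t, hsΦ, htΨ, hst⟩ := hpair₀ c hc
    have h1 : (x c, s) ∈ insert (s₁, s₂) Φ₀ := Set.mem_insert_of_mem _ hsΦ
    have h2 : (x c, s₂) ∈ insert (s₁, s₂) Φ₀ := by
      rw [hcs]; exact Set.mem_insert _ _
    have hs2s : s₂ = s := relBij_right_unique hMbij h2 h1
    have htaeq : τ t_a = τ t := by rw [← hσ2, hs2s, hst]
    exact hτta t (mem_rran_of_mem htΨ) htaeq.symm
  have hcov_s₁ : Cov S.toES (x '' (w \ {a})) s₁ := by
    refine ⟨hxw0, hs₁not, ?_⟩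
    have hd : rdom (insert (s₁, s₂) Φ₀) = insert s₁ (x '' (w \ {a})) := by
      rw [rdom_insert, hΦ₀dom]
    have hcfg := (hSSi.1 _ hins).2.1
    rw [hd] at hcfg
    exact hcfg
  have hs₁xa : x a = s₁ := by
    obtain ⟨s₀, _, huniq₀⟩ := hrec _ _ hxw0 hcovA hpol
    have e1 := huniq₀ (x a) ⟨hcov_xa, rfl⟩
    have e2 := huniq₀ s₁ ⟨hcov_s₁, hσ1⟩
    rw [e1, e2]
  have hΦSS : insert (x a, s₂) Φ₀ ∈ SS := by rw [hs₁xa]; exact hins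
  have hnegext : NegRelExt S Φ₀ (insert (x a, s₂) Φ₀) := by
    refine ⟨Set.subset_insert _ _, ?_⟩
    intro p hp hnp
    have hpe : p = (x a, s₂) := by
      rcases hp with h | h
      · exact h
      · exact absurd h hnp
    subst hpe
    constructor
    · show S.pol (x a) = false
      rw [← hσpol]; exact hpol
    · show S.pol s₂ = false
      rw [← hσpol, hσ2]; exact hpolβ
  have hΦsub : insert (x a, s₂) Φ₀ ∈ Ssub := hSsubNeg Φ₀ hΦ₀sub _ hΦSS hnegext
  refine ⟨insert (x a, s₂) Φ₀, Ψ', hΦsub, hΨ'sub, ?_, hΨ'dom, ?_⟩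
  · rw [rdom_insert, hΦ₀dom]
    exact hximg.symm
  · intro b hb
    by_cases hba : b = a
    · subst hba
      exact ⟨s₂, t_a, Set.mem_insert _ _, hta, by rw [hσ2]⟩
    · have hb0 : b ∈ w \ {a} := ⟨hb, fun h => hba (Set.mem_singleton_iff.1 h)⟩
      obtain ⟨s, t, hsΦ, htΨ, hst⟩ := hpair₀ b hb0
      exact ⟨s, t, Set.mem_insert_of_mem _ hsΦ, hΨ₀Ψ' htΨ, hst⟩

end Aux14d


section Aux14e

open Set

variable {X SE TE AE : Type u}

/-- Uniqueness of the one-step extension, when the new event is negative in the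
game of the left strategy. -/
lemma uniq_lemma {EX : ES X} {S : ESP SE} {T : ESP TE} {G : ESP AE}
    {SS : Set (Rel2 SE)} {ST : Set (Rel2 TE)} {SA : Set (Rel2 AE)}
    {Ssub : Set (Rel2 SE)} {Tsub : Set (Rel2 TE)}
    (hSA : IsIsoFamily G.toES SA) (hpA : PolPres G SA)
    (hSSi : IsIsoFamily S.toES SS) (hSTi : IsIsoFamily T.toES ST)
    (hSsubSS : Ssub ⊆ SS) (hTsubST : Tsub ⊆ ST) (hTsubI : IsIsoFamily T.toES Tsub)
    (hpS : PolPres S SS) (hpT : PolPres T ST) (hTthin : ThinFam T Tsub)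
    {σ : SE → AE} {τ : TE → AE}
    (hσes : IsMap S.toES G.toES σ) (hσpol : ∀ e, G.pol (σ e) = S.pol e)
    (hσr : StrongReceptive S SS G SA σ)
    (hτes : IsMap T.toES G.toES τ) (hτpol : ∀ e, T.pol e = !G.pol (τ e))
    {x : X → SE} {y : X → TE}
    (hxmap : IsMap EX S.toES x) (hymap : IsMap EX T.toES y)
    {w : Set X} (hw : Config EX w) {a : X} (ha : a ∈ w)
    (hw0 : Config EX (w \ {a}))
    (hθ : pairSet (fun b => σ (x b)) (fun b => τ (y b)) w ∈ SA)
    (hpol : G.pol (σ (x a)) = false)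
    {Φ Φ' : Rel2 SE} {Ψ Ψ' : Rel2 TE}
    (hI : MInv Ssub Tsub x y σ τ w Φ Ψ)
    (hI' : MInv Ssub Tsub x y σ τ w Φ' Ψ')
    (hres : relRestrict Φ (x '' (w \ {a})) = relRestrict Φ' (x '' (w \ {a})))
    (hresΨ : relRestrict Ψ (y '' (w \ {a})) = relRestrict Ψ' (y '' (w \ {a}))) :
    Φ = Φ' ∧ Ψ = Ψ' := by
  have hxw : Config S.toES (x '' w) := hxmap.1 w hw
  have hxw0 : Config S.toES (x '' (w \ {a})) := hxmap.1 _ hw0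
  have hyw0 : Config T.toES (y '' (w \ {a})) := hymap.1 _ hw0
  have hwa : w = insert a (w \ {a}) := insert_diff_self_of_mem' ha
  have hxa0 : x a ∉ x '' (w \ {a}) := by
    rintro ⟨b, hb, hba⟩
    have : a = b := hxmap.2 w hw a ha b hb.1 hba.symm
    exact hb.2 (Set.mem_singleton_iff.2 this.symm)
  have hya0 : y a ∉ y '' (w \ {a}) := by
    rintro ⟨b, hb, hba⟩
    have : a = b := hymap.2 w hw a ha b hb.1 hba.symm
    exact hb.2 (Set.mem_singleton_iff.2 this.symm)
  have hximg : x '' w = insert (x a) (x '' (w \ {a})) := by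
    conv_lhs => rw [hwa]
    rw [Set.image_insert_eq]
  have hyimg : y '' w = insert (y a) (y '' (w \ {a})) := by
    conv_lhs => rw [hwa]
    rw [Set.image_insert_eq]
  obtain ⟨s, t, hsΦ, htΨ, hst⟩ := hI.2.2.2.2 a ha
  obtain ⟨s', t', hsΦ', htΨ', hst'⟩ := hI'.2.2.2.2 a ha
  have hΦSS : Φ ∈ SS := hSsubSS hI.1
  have hΦ'SS : Φ' ∈ SS := hSsubSS hI'.1
  have hΨST : Ψ ∈ ST := hTsubST hI.2.1
  have hΨ'ST : Ψ' ∈ ST := hTsubST hI'.2.1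
  have hΦbij : relBij Φ := (hSSi.1 Φ hΦSS).1
  have hΦ'bij : relBij Φ' := (hSSi.1 Φ' hΦ'SS).1
  have hΨbij : relBij Ψ := (hSTi.1 Ψ hΨST).1
  have hΨ'bij : relBij Ψ' := (hSTi.1 Ψ' hΨ'ST).1
  -- decompositions
  have hdec : ∀ (Θ : Rel2 SE), relBij Θ → rdom Θ = x '' w → (x a, s) ∈ Θ →
      Θ = insert (x a, s) (relRestrict Θ (x '' (w \ {a}))) := by
    intro Θ hbij hdom hmem
    ext ⟨u, v⟩
    constructor
    · intro hp
      have hu : u ∈ rdom Θ := ⟨(u, v), hp, rfl⟩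
      rw [hdom, hximg] at hu
      rcases hu with hu | hu
      · have : v = s := by
          apply relBij_right_unique hbij _ hmem
          rw [← hu] at hmem ⊢
          exact hp
        left
        rw [hu, this]
      · right
        exact ⟨hp, hu⟩
    · intro hp
      rcases hp with hp | hp
      · rw [hp]; exact hmem
      · exact hp.1
  have hdecT : ∀ (Θ : Rel2 TE) (tt : TE), relBij Θ → rdom Θ = y '' w → (y a, tt) ∈ Θ →
      Θ = insert (y a, tt) (relRestrict Θ (y '' (w \ {a}))) := by
    intro Θ tt hbij hdom hmem
    ext ⟨u, v⟩
    constructor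
    · intro hp
      have hu : u ∈ rdom Θ := ⟨(u, v), hp, rfl⟩
      rw [hdom, hyimg] at hu
      rcases hu with hu | hu
      · have : v = tt := by
          apply relBij_right_unique hbij _ hmem
          rw [← hu] at hmem ⊢
          exact hp
        left
        rw [hu, this]
      · right
        exact ⟨hp, hu⟩
    · intro hp
      rcases hp with hp | hp
      · rw [hp]; exact hmem
      · exact hp.1
  have hdecΨ : Ψ = insert (y a, t) (relRestrict Ψ (y '' (w \ {a}))) :=
    hdecT Ψ t hΨbij hI.2.2.2.1 htΨ
  have hdecΨ' : Ψ' = insert (y a, t') (relRestrict Ψ' (y '' (w \ {a}))) :=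
    hdecT Ψ' t' hΨ'bij hI'.2.2.2.1 htΨ'
  -- thinness forces t = t'
  have hpolya : G.pol (τ (y a)) = false := by
    have h := hpA _ hθ (σ (x a), τ (y a)) (mem_pairSet' ha)
    rw [← h]
    exact hpol
  have hTya : T.pol (y a) = true := by rw [hτpol, hpolya]; rfl
  have hΨ₀Tsub : relRestrict Ψ (y '' (w \ {a})) ∈ Tsub := by
    apply hTsubI.2.2.2.2.1 Ψ hI.2.1 _ hyw0
    rw [hI.2.2.2.1]
    exact Set.image_mono (f := y) Set.diff_subset
  have hposext : ∀ (Θ : Rel2 TE) (tt : TE), Θ ∈ ST →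
      Θ = insert (y a, tt) (relRestrict Θ (y '' (w \ {a}))) → (y a, tt) ∈ Θ →
      PosRelExt T (relRestrict Θ (y '' (w \ {a}))) Θ := by
    intro Θ tt hΘST hd hmem
    refine ⟨relRestrict_subset _ _, ?_⟩
    intro p hp hnp
    have hpe : p = (y a, tt) := by
      rw [hd] at hp
      rcases hp with h | h
      · exact h
      · exact absurd h hnp
    subst hpe
    constructor
    · exact hTya
    · show T.pol tt = true
      rw [← hpT Θ hΘST (y a, tt) hmem]
      exact hTya
  have hpose : PosRelExt T (relRestrict Ψ (y '' (w \ {a}))) Ψ :=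
    hposext Ψ t hΨST hdecΨ htΨ
  have hpose' : PosRelExt T (relRestrict Ψ (y '' (w \ {a}))) Ψ' := by
    rw [hresΨ]
    exact hposext Ψ' t' hΨ'ST hdecΨ' htΨ'
  have hUnion : Ψ ∪ Ψ' ∈ Tsub := by
    apply hTthin _ hΨ₀Tsub Ψ hI.2.1 Ψ' hI'.2.1 hpose hpose'
    rw [hI.2.2.2.1, hI'.2.2.2.1, Set.union_self]
    exact hymap.1 w hw
  have hUbij : relBij (Ψ ∪ Ψ') := (hSTi.1 _ (hTsubST hUnion)).1
  have htt' : t = t' :=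
    relBij_right_unique hUbij (Set.mem_union_left _ htΨ) (Set.mem_union_right _ htΨ')
  have hΨeq : Ψ = Ψ' := by
    rw [hdecΨ, hdecΨ', hresΨ, htt']
  -- receptivity forces s = s'
  have hdecΦ : Φ = insert (x a, s) (relRestrict Φ (x '' (w \ {a}))) :=
    hdec Φ hΦbij hI.2.2.1 hsΦ
  have hdecΦ' : Φ' = insert (x a, s') (relRestrict Φ' (x '' (w \ {a}))) := by
    ext ⟨u, v⟩
    constructor
    · intro hp
      have hu : u ∈ rdom Φ' := ⟨(u, v), hp, rfl⟩
      rw [hI'.2.2.1, hximg] at hu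
      rcases hu with hu | hu
      · have : v = s' := by
          apply relBij_right_unique hΦ'bij _ hsΦ'
          rw [← hu] at hsΦ' ⊢
          exact hp
        left
        rw [hu, this]
      · right
        exact ⟨hp, hu⟩
    · intro hp
      rcases hp with hp | hp
      · rw [hp]; exact hsΦ'
      · exact hp.1
  have hΦ₀SS : relRestrict Φ (x '' (w \ {a})) ∈ SS := by
    apply hSSi.2.2.2.2.1 Φ hΦSS _ hxw0
    rw [hI.2.2.1]
    exact Set.image_mono (f := x) Set.diff_subset
  have hranΦ₀ : Config S.toES (rran (relRestrict Φ (x '' (w \ {a})))) :=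
    (hSSi.1 _ hΦ₀SS).2.2
  have hsnot : s ∉ rran (relRestrict Φ (x '' (w \ {a}))) := by
    intro hc
    obtain ⟨u₀, hu₀⟩ := mem_rran.1 hc
    have : u₀ = x a := relBij_left_unique hΦbij hu₀.1 hsΦ
    rw [this] at hu₀
    exact hxa0 hu₀.2
  have hs'not : s' ∉ rran (relRestrict Φ (x '' (w \ {a}))) := by
    rw [hres]
    intro hc
    obtain ⟨u₀, hu₀⟩ := mem_rran.1 hc
    have : u₀ = x a := relBij_left_unique hΦ'bij hu₀.1 hsΦ'
    rw [this] at hu₀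
    exact hxa0 hu₀.2
  have hrranΦ : rran Φ = insert s (rran (relRestrict Φ (x '' (w \ {a})))) := by
    conv_lhs => rw [hdecΦ]
    rw [rran_insert]
  have hrranΦ' : rran Φ' = insert s' (rran (relRestrict Φ (x '' (w \ {a})))) := by
    conv_lhs => rw [hdecΦ']
    rw [rran_insert, hres]
  have hcovs : Cov S.toES (rran (relRestrict Φ (x '' (w \ {a})))) s := by
    refine ⟨hranΦ₀, hsnot, ?_⟩
    rw [← hrranΦ]
    exact (hSSi.1 Φ hΦSS).2.2
  have hcovs' : Cov S.toES (rran (relRestrict Φ (x '' (w \ {a})))) s' := by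
    refine ⟨hranΦ₀, hs'not, ?_⟩
    rw [← hrranΦ']
    exact (hSSi.1 Φ' hΦ'SS).2.2
  have hσs : G.pol (σ s) = false := by
    rw [hσpol]
    rw [← hpS Φ hΦSS (x a, s) hsΦ]
    rw [← hσpol]
    exact hpol
  have hcovG : Cov G.toES (σ '' (rran (relRestrict Φ (x '' (w \ {a}))))) (σ s) := by
    refine ⟨hσes.1 _ hranΦ₀, ?_, ?_⟩
    · rintro ⟨u, hu, huv⟩
      have hsub : rran (relRestrict Φ (x '' (w \ {a}))) ⊆ rran Φ :=
        Set.image_mono (f := Prod.snd) (relRestrict_subset _ _)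
      have hsr : s ∈ rran Φ := mem_rran_of_mem hsΦ
      have : u = s := hσes.2 (rran Φ) (hSSi.1 Φ hΦSS).2.2 u (hsub hu) s hsr huv
      rw [this] at hu
      exact hsnot hu
    · have : insert (σ s) (σ '' (rran (relRestrict Φ (x '' (w \ {a}))))) =
          σ '' (rran Φ) := by
        rw [hrranΦ, Set.image_insert_eq]
      rw [this]
      exact hσes.1 _ (hSSi.1 Φ hΦSS).2.2
  have hrec : Receptive S G σ := receptive_of_strong hSSi (fun v hv => hSA.2.1 v hv) hσr
  have hss' : s = s' := by
    obtain ⟨s₀, _, huniq₀⟩ := hrec _ _ hranΦ₀ hcovG hσs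
    have e1 := huniq₀ s ⟨hcovs, rfl⟩
    have e2 := huniq₀ s' ⟨hcovs', by rw [hst', ← htt', ← hst]⟩
    rw [e1, e2]
  have hΦeq : Φ = Φ' := by
    rw [hdecΦ, hdecΦ', hres, hss']
  exact ⟨hΦeq, hΨeq⟩

end Aux14e


section Aux14f

open Set

variable {X SE TE AE : Type u}

lemma polPres_dual {G : ESP AE} {SA : Set (Rel2 AE)} (h : PolPres G SA) :
    PolPres G.dual SA := by
  intro θ hθ p hp
  show (!G.pol p.1) = !G.pol p.2
  rw [h θ hθ p hp]

lemma rdom_empty : rdom (∅ : Rel2 SE) = ∅ := by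
  simp [rdom]

lemma relId_empty : relId (∅ : Set SE) = ∅ := by
  simp [relId]

/-- Existence and uniqueness of straightened symmetry pairs over every
configuration. -/
lemma key_lemma {EX : ES X} {S : ESP SE} {T : ESP TE} {A : ESP AE}
    {SS : Set (Rel2 SE)} {ST : Set (Rel2 TE)} {SA : Set (Rel2 AE)}
    {Ssub : Set (Rel2 SE)} {Tsub : Set (Rel2 TE)}
    (hSS : IsIsoFamily S.toES SS) (hpS : PolPres S SS)
    (hST : IsIsoFamily T.toES ST) (hpT : PolPres T ST)
    (hSA : IsIsoFamily A.toES SA) (hpA : PolPres A SA)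
    (hSsubSS : Ssub ⊆ SS) (hSsubI : IsIsoFamily S.toES Ssub)
    (hSsubNeg : ∀ θ ∈ Ssub, ∀ θ' ∈ SS, NegRelExt S θ θ' → θ' ∈ Ssub)
    (hSthin : ThinFam S Ssub)
    (hTsubST : Tsub ⊆ ST) (hTsubI : IsIsoFamily T.toES Tsub)
    (hTsubNeg : ∀ θ ∈ Tsub, ∀ θ' ∈ ST, NegRelExt T θ θ' → θ' ∈ Tsub)
    (hTthin : ThinFam T Tsub)
    {σ : SE → AE} {τ : TE → AE}
    (hσmap : IsESPMap S A σ) (hσr : StrongReceptive S SS A SA σ)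
    (hσfam : FamPres SS SA σ)
    (hτmap : IsESPMap T A.dual τ) (hτr : StrongReceptive T ST A.dual SA τ)
    (hτfam : FamPres ST SA τ)
    {x : X → SE} {y : X → TE}
    (hxmap : IsMap EX S.toES x) (hymap : IsMap EX T.toES y)
    (hsym : ∀ w, Config EX w → pairSet (fun b => σ (x b)) (fun b => τ (y b)) w ∈ SA) :
    ∀ w, Config EX w →
      (∃ Φ Ψ, MInv Ssub Tsub x y σ τ w Φ Ψ) ∧
      (∀ Φ Ψ Φ' Ψ', MInv Ssub Tsub x y σ τ w Φ Ψ →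
        MInv Ssub Tsub x y σ τ w Φ' Ψ' → Φ = Φ' ∧ Ψ = Ψ') := by
  have main : ∀ n : ℕ, ∀ w, Config EX w → w.ncard = n →
      (∃ Φ Ψ, MInv Ssub Tsub x y σ τ w Φ Ψ) ∧
      (∀ Φ Ψ Φ' Ψ', MInv Ssub Tsub x y σ τ w Φ Ψ →
        MInv Ssub Tsub x y σ τ w Φ' Ψ' → Φ = Φ' ∧ Ψ = Ψ') := by
    intro n
    induction n using Nat.strong_induction_on with
    | _ n ih =>
      intro w hw hcard
      by_cases hempty : w = ∅
      · subst hempty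
        constructor
        · refine ⟨∅, ∅, ?_, ?_, ?_, ?_, ?_⟩
          · have h := hSsubI.2.1 ∅ (config_empty S.toES)
            rwa [relId_empty] at h
          · have h := hTsubI.2.1 ∅ (config_empty T.toES)
            rwa [show relId (∅ : Set TE) = ∅ from by simp [relId]] at h
          · simp [rdom]
          · simp [rdom]
          · intro a ha; exact absurd ha (Set.notMem_empty a)
        · intro Φ Ψ Φ' Ψ' hI hI'
          have hzero : ∀ (Θ : Rel2 SE), rdom Θ = x '' (∅ : Set X) → Θ = ∅ := by
            intro Θ hd
            ext p
            simp only [Set.mem_empty_iff_false, iff_false]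
            intro hp
            have : p.1 ∈ rdom Θ := ⟨p, hp, rfl⟩
            rw [hd] at this
            simp at this
          have hzeroT : ∀ (Θ : Rel2 TE), rdom Θ = y '' (∅ : Set X) → Θ = ∅ := by
            intro Θ hd
            ext p
            simp only [Set.mem_empty_iff_false, iff_false]
            intro hp
            have : p.1 ∈ rdom Θ := ⟨p, hp, rfl⟩
            rw [hd] at this
            simp at this
          rw [hzero Φ hI.2.2.1, hzero Φ' hI'.2.2.1,
              hzeroT Ψ hI.2.2.2.1, hzeroT Ψ' hI'.2.2.2.1]
          exact ⟨rfl, rfl⟩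
      · have hfin : w.Finite := config_finite hw
        have hne : w.Nonempty := Set.nonempty_iff_ne_empty.2 hempty
        obtain ⟨a, ha, hamax⟩ := exists_max_in EX hfin hne
        have hw0 : Config EX (w \ {a}) := config_diff_max hw hamax
        have hpos : 0 < n := by
          rw [← hcard]
          exact (Set.ncard_pos hfin).2 hne
        have hcard0 : (w \ {a}).ncard = n - 1 := by
          rw [Set.ncard_diff_singleton_of_mem ha, hcard]
        have hlt : n - 1 < n := Nat.sub_lt hpos Nat.one_pos
        obtain ⟨⟨Φ₀, Ψ₀, hI₀⟩, huniq₀⟩ := ih (n - 1) hlt (w \ {a}) hw0 hcard0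
        have hθw := hsym w hw
        have hτpol : ∀ e, T.pol e = !A.pol (τ e) := fun e => (hτmap.2 e).symm
        have hσpol' : ∀ e, S.pol e = !A.dual.pol (σ e) := by
          intro e
          show S.pol e = !!A.pol (σ e)
          rw [Bool.not_not]
          exact (hσmap.2 e).symm
        have hθw' : pairSet (fun b => τ (y b)) (fun b => σ (x b)) w ∈ SA := by
          have h := hSA.2.2.1 _ hθw
          rwa [relInv_pairSet] at h
        constructor
        · -- existence
          by_cases hc : A.pol (σ (x a)) = false
          · exact step_lemma hSA hpA hSS hST hSsubSS hSsubNeg hTsubST hTsubI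
              hσmap.1 hσmap.2 hσr hτmap.1 hτfam hxmap hymap hw ha hw0 hθw hc hI₀
          · have hpolB : A.dual.pol (τ (y a)) = false := by
              have h := hpA _ hθw (σ (x a), τ (y a)) (mem_pairSet' ha)
              have hc' : A.pol (σ (x a)) = true := by
                revert hc
                cases (A.pol (σ (x a))) <;> simp
              show (!A.pol (τ (y a))) = false
              rw [← h, hc']
              rfl
            obtain ⟨Ψ, Φ, hMI⟩ := step_lemma (G := A.dual) hSA (polPres_dual hpA)
              hST hSS hTsubST hTsubNeg hSsubSS hSsubI
              hτmap.1 hτmap.2 hτr hσmap.1 hσfam hymap hxmap hw ha hw0 hθw' hpolB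
              (minv_swap.1 hI₀)
            exact ⟨Φ, Ψ, minv_swap.2 hMI⟩
        · -- uniqueness
          intro Φ Ψ Φ' Ψ' hI hI'
          have hR := minv_restrict hSsubI hTsubI hxmap hymap hw0 Set.diff_subset hI
          have hR' := minv_restrict hSsubI hTsubI hxmap hymap hw0 Set.diff_subset hI'
          obtain ⟨hres, hresΨ⟩ := huniq₀ _ _ _ _ hR hR'
          by_cases hc : A.pol (σ (x a)) = false
          · exact uniq_lemma hSA hpA hSS hST hSsubSS hTsubST hTsubI hpS hpT hTthin
              hσmap.1 hσmap.2 hσr hτmap.1 hτpol hxmap hymap hw ha hw0 hθw hc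
              hI hI' hres hresΨ
          · have hpolB : A.dual.pol (τ (y a)) = false := by
              have h := hpA _ hθw (σ (x a), τ (y a)) (mem_pairSet' ha)
              have hc' : A.pol (σ (x a)) = true := by
                revert hc
                cases (A.pol (σ (x a))) <;> simp
              show (!A.pol (τ (y a))) = false
              rw [← h, hc']
              rfl
            have h := uniq_lemma (G := A.dual) hSA (polPres_dual hpA)
              hST hSS hTsubST hSsubSS hSsubI hpT hpS hSthin
              hτmap.1 hτmap.2 hτr hσmap.1 hσpol' hymap hxmap hw ha hw0 hθw' hpolB
              (minv_swap.1 hI) (minv_swap.1 hI') hresΨ hres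
            exact ⟨h.2, h.1⟩
  intro w hw
  exact main w.ncard w hw rfl

end Aux14f


section Aux14g

open Set

variable {X E SE TE AE : Type u}

/-- Map a relation by two functions, one on each side. -/
def relMap2 (f g : X → E) (Θ : Rel2 X) : Rel2 E := (fun p => (f p.1, g p.2)) '' Θ

lemma mem_relMap2 {f g : X → E} {Θ : Rel2 X} {q : E × E} :
    q ∈ relMap2 f g Θ ↔ ∃ p ∈ Θ, (f p.1, g p.2) = q := Set.mem_image _ _ _

lemma relMap_eq_relMap2 (f : X → E) (Θ : Rel2 X) : relMap f Θ = relMap2 f f Θ := by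
  ext ⟨u, v⟩
  constructor
  · rintro ⟨⟨a, b⟩, hab, he⟩; rw [← he]; exact ⟨(a, b), hab, rfl⟩
  · rintro ⟨⟨a, b⟩, hab, he⟩; rw [← he]; exact ⟨(a, b), hab, rfl⟩

lemma rdom_relMap2 (f g : X → E) (Θ : Rel2 X) :
    rdom (relMap2 f g Θ) = f '' rdom Θ := by
  simp only [rdom, relMap2, Set.image_image]

lemma rran_relMap2 (f g : X → E) (Θ : Rel2 X) :
    rran (relMap2 f g Θ) = g '' rran Θ := by
  simp only [rran, relMap2, Set.image_image]

lemma pairSet_congr {F' : Type u} {f f' : X → E} {g g' : X → F'} {w : Set X}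
    (hf : ∀ a ∈ w, f a = f' a) (hg : ∀ a ∈ w, g a = g' a) :
    pairSet f g w = pairSet f' g' w := by
  ext p
  constructor
  · rintro ⟨a, ha, rfl⟩
    exact ⟨a, ha, by show (f' a, g' a) = (f a, g a); rw [hf a ha, hg a ha]⟩
  · rintro ⟨a, ha, rfl⟩
    exact ⟨a, ha, by show (f a, g a) = (f' a, g' a); rw [hf a ha, hg a ha]⟩

lemma relComp_relMap2_pairSet {Θ : Rel2 X} {f g k : X → E} {w₂ : Set X}
    (hran : ∀ p ∈ Θ, p.2 ∈ w₂)
    (hinj : ∀ b ∈ w₂, ∀ c ∈ w₂, g b = g c → b = c) :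
    relComp (relMap2 f g Θ) (pairSet g k w₂) = relMap2 f k Θ := by
  ext ⟨u, v⟩
  constructor
  · rintro ⟨m, hum, hmv⟩
    obtain ⟨⟨a, b⟩, hab, habe⟩ := mem_relMap2.1 hum
    obtain ⟨c, hc, hce⟩ := mem_pairSet.1 hmv
    have hgb : g b = m := congrArg Prod.snd habe
    have hgc : g c = m := congrArg Prod.fst hce
    have hbc : b = c := hinj b (hran _ hab) c hc (by rw [hgb, hgc])
    refine ⟨(a, b), hab, ?_⟩
    have h1 : f a = u := congrArg Prod.fst habe
    have h2 : k c = v := congrArg Prod.snd hce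
    rw [Prod.ext_iff]
    exact ⟨h1, by rw [hbc]; exact h2⟩
  · rintro ⟨⟨a, b⟩, hab, habe⟩
    have h1 : f a = u := congrArg Prod.fst habe
    have h2 : k b = v := congrArg Prod.snd habe
    refine ⟨g b, ?_, ?_⟩
    · exact ⟨(a, b), hab, by rw [Prod.ext_iff]; exact ⟨h1, rfl⟩⟩
    · have := mem_pairSet' (f := g) (g := k) (hran _ hab)
      rwa [h2] at this

lemma relComp_pairSet_relMap2 {Θ : Rel2 X} {f g k : X → E} {w₁ : Set X}
    (hdom : ∀ p ∈ Θ, p.1 ∈ w₁)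
    (hinj : ∀ b ∈ w₁, ∀ c ∈ w₁, g b = g c → b = c) :
    relComp (pairSet k g w₁) (relMap2 g f Θ) = relMap2 k f Θ := by
  ext ⟨u, v⟩
  constructor
  · rintro ⟨m, hum, hmv⟩
    obtain ⟨c, hc, hce⟩ := mem_pairSet.1 hum
    obtain ⟨⟨a, b⟩, hab, habe⟩ := mem_relMap2.1 hmv
    have hkc : k c = u := congrArg Prod.fst hce
    have hgc : g c = m := congrArg Prod.snd hce
    have hga : g a = m := congrArg Prod.fst habe
    have hfb : f b = v := congrArg Prod.snd habe
    have hca : c = a := hinj c hc a (hdom _ hab) (by rw [hgc, hga])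
    refine ⟨(a, b), hab, ?_⟩
    rw [Prod.ext_iff]
    exact ⟨by rw [← hca]; exact hkc, hfb⟩
  · rintro ⟨⟨a, b⟩, hab, habe⟩
    have h1 : k a = u := congrArg Prod.fst habe
    have h2 : f b = v := congrArg Prod.snd habe
    refine ⟨g a, ?_, ?_⟩
    · have := mem_pairSet' (f := k) (g := g) (hdom _ hab)
      rwa [h1] at this
    · exact ⟨(a, b), hab, by rw [Prod.ext_iff]; exact ⟨rfl, h2⟩⟩

lemma relComp_pairSet_pairSet {f g k : X → E} {w : Set X}
    (hinj : ∀ b ∈ w, ∀ c ∈ w, g b = g c → b = c) :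
    relComp (pairSet f g w) (pairSet g k w) = pairSet f k w := by
  ext ⟨u, v⟩
  constructor
  · rintro ⟨m, hum, hmv⟩
    obtain ⟨c, hc, hce⟩ := mem_pairSet.1 hum
    obtain ⟨d, hd, hde⟩ := mem_pairSet.1 hmv
    have h1 : f c = u := congrArg Prod.fst hce
    have h2 : g c = m := congrArg Prod.snd hce
    have h3 : g d = m := congrArg Prod.fst hde
    have h4 : k d = v := congrArg Prod.snd hde
    have hcd : c = d := hinj c hc d hd (by rw [h2, h3])
    refine ⟨c, hc, ?_⟩
    show (f c, k c) = (u, v)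
    rw [Prod.ext_iff]
    exact ⟨h1, by rw [hcd]; exact h4⟩
  · rintro ⟨c, hc, hce⟩
    have h1 : f c = u := congrArg Prod.fst hce
    have h2 : k c = v := congrArg Prod.snd hce
    refine ⟨g c, ?_, ?_⟩
    · have := mem_pairSet' (f := f) (g := g) hc
      rwa [h1] at this
    · have := mem_pairSet' (f := g) (g := k) hc
      rwa [h2] at this

end Aux14g

/-- the pullback of strong-receptive courteous pre-∼-strategies with
receptive thin sub-symmetries, over a race-preserving game, is a bipullback. -/
theorem statement14 {SE TE AE : Type u}
    (S : ESP SE) (SS : Set (Rel2 SE)) (T : ESP TE) (ST : Set (Rel2 TE))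
    (A : ESP AE) (SA : Set (Rel2 AE))
    (hSS : IsIsoFamily S.toES SS) (hpS : PolPres S SS)
    (hST : IsIsoFamily T.toES ST) (hpT : PolPres T ST)
    (hSA : IsIsoFamily A.toES SA) (hpA : PolPres A SA)
    (hrace : RacePresFam A SA)
    (hSsub : ∃ Ssub ⊆ SS, IsIsoFamily S.toES Ssub ∧
      (∀ θ ∈ Ssub, ∀ θ' ∈ SS, NegRelExt S θ θ' → θ' ∈ Ssub) ∧ ThinFam S Ssub)
    (hTsub : ∃ Tsub ⊆ ST, IsIsoFamily T.toES Tsub ∧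
      (∀ θ ∈ Tsub, ∀ θ' ∈ ST, NegRelExt T θ θ' → θ' ∈ Tsub) ∧ ThinFam T Tsub)
    (σ : SE → AE) (τ : TE → AE)
    (hσmap : IsESPMap S A σ) (hσfam : FamPres SS SA σ)
    (hσc : Courteous S A σ) (hσr : StrongReceptive S SS A SA σ)
    (hτmap : IsESPMap T A.dual τ) (hτfam : FamPres ST SA τ)
    (hτc : Courteous T A.dual τ) (hτr : StrongReceptive T ST A.dual SA τ)
    (P : ES {p : Set (SE × TE) // IsPrime (PbFam S.toES T.toES σ τ) p})
    (hle : ∀ p q, P.le p q ↔ p.1 ⊆ q.1)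
    (hcon : ∀ X, X ∈ P.Con ↔ X.Finite ∧
      ⋃₀ (Subtype.val '' X) ∈ PbFam S.toES T.toES σ τ)
    (Pi1 : {p : Set (SE × TE) // IsPrime (PbFam S.toES T.toES σ τ) p} → SE)
    (Pi2 : {p : Set (SE × TE) // IsPrime (PbFam S.toES T.toES σ τ) p} → TE)
    (hPi : ∀ p e, PrRep (PbFam S.toES T.toES σ τ) p.1 e → Pi1 p = e.1 ∧ Pi2 p = e.2) :
    SymMaps P SA (fun p => σ (Pi1 p)) (fun p => τ (Pi2 p)) ∧
    (∀ {X : Type u} (EX : ES X) (SX : Set (Rel2 X)), IsIsoFamily EX SX →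
      ∀ (x : X → SE) (y : X → TE),
        IsMap EX S.toES x → FamPres SX SS x →
        IsMap EX T.toES y → FamPres SX ST y →
        SymMaps EX SA (σ ∘ x) (τ ∘ y) →
        ∃ h, IsMap EX P h ∧ FamPres SX (famP S.toES T.toES σ τ SS ST P Pi1 Pi2) h ∧
          SymMaps EX SS (Pi1 ∘ h) x ∧ SymMaps EX ST (Pi2 ∘ h) y ∧
          ∀ h', IsMap EX P h' →
            FamPres SX (famP S.toES T.toES σ τ SS ST P Pi1 Pi2) h' →
            SymMaps EX SS (Pi1 ∘ h') x → SymMaps EX ST (Pi2 ∘ h') y →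
            SymMaps EX (famP S.toES T.toES σ τ SS ST P Pi1 Pi2) h h') := by
  classical
  -- every prime of the pullback, as an event of `P`, is itself a member of the family
  have hvalFam : ∀ p : {p : Set (SE × TE) // IsPrime (PbFam S.toES T.toES σ τ) p},
      p.1 ∈ PbFam S.toES T.toES σ τ := by
    intro p
    have h1 := (hcon {p}).1 (P.con_singleton p)
    have h2 : ⋃₀ (Subtype.val '' ({p} : Set _)) = p.1 := by simp
    exact h2 ▸ h1.2
  constructor
  · -- Part 1: σ ∘ Π₁ ∼ τ ∘ Π₂
    intro z hz
    have hU := ((hcon z).1 hz.1).2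
    have hc1 : ∀ p ∈ z, σ (Pi1 p) = τ (Pi2 p) ∧
        (Pi1 p, Pi2 p) ∈ ⋃₀ (Subtype.val '' z) := by
      intro p hp
      obtain ⟨xx, hxx, e, he, hpe⟩ := p.2
      obtain ⟨h1, h2⟩ := hPi p e ⟨xx, hxx, he, hpe⟩
      have hfg : σ e.1 = τ e.2 := hxx.2 e he
      have hein : e ∈ p.1 := hpe ▸ mem_famPrime_self he
      have heU : e ∈ ⋃₀ (Subtype.val '' z) := ⟨p.1, ⟨p, hp, rfl⟩, hein⟩
      constructor
      · rw [h1, h2]; exact hfg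
      · rw [h1, h2, Prod.mk.eta]; exact heU
    have hc2 : ∀ e ∈ ⋃₀ (Subtype.val '' z), ∃ p ∈ z, Pi1 p = e.1 ∧ Pi2 p = e.2 := by
      rintro e ⟨Y, hY, heY⟩
      obtain ⟨p₀, hp₀, rfl⟩ := hY
      have heU : e ∈ ⋃₀ (Subtype.val '' z) := ⟨p₀.1, ⟨p₀, hp₀, rfl⟩, heY⟩
      have hq : IsPrime (PbFam S.toES T.toES σ τ)
          (FamPrime (PbFam S.toES T.toES σ τ) (⋃₀ (Subtype.val '' z)) e) :=
        ⟨_, hU, e, heU, rfl⟩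
      have hp₀U : p₀.1 ⊆ ⋃₀ (Subtype.val '' z) := fun q hq' => ⟨p₀.1, ⟨p₀, hp₀, rfl⟩, hq'⟩
      have hsub : FamPrime (PbFam S.toES T.toES σ τ) (⋃₀ (Subtype.val '' z)) e ⊆ p₀.1 :=
        famPrime_subset_of_mem (hvalFam p₀) hp₀U heY
      have hmem : (⟨_, hq⟩ : {p // IsPrime (PbFam S.toES T.toES σ τ) p}) ∈ z :=
        hz.2 hp₀ ((hle _ p₀).2 hsub)
      exact ⟨_, hmem, hPi _ e ⟨_, hU, heU, rfl⟩⟩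
    have hgoal : {p | ∃ a ∈ z, p = (σ (Pi1 a), τ (Pi2 a))} =
        relId ((fun e : SE × TE => σ e.1) '' (⋃₀ (Subtype.val '' z))) := by
      ext q
      constructor
      · rintro ⟨p, hp, rfl⟩
        obtain ⟨hfg, hin⟩ := hc1 p hp
        apply mem_relId.2
        constructor
        · exact ⟨(Pi1 p, Pi2 p), hin, rfl⟩
        · exact hfg.symm
      · intro hq
        obtain ⟨h1, h2⟩ := mem_relId.1 hq
        obtain ⟨e, heU, he1⟩ := h1
        obtain ⟨p, hpz, hp1, hp2⟩ := hc2 e heU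
        refine ⟨p, hpz, ?_⟩
        have hfg : σ e.1 = τ e.2 := hU.2 e heU
        have he1' : σ e.1 = q.1 := he1
        have hq1 : q.1 = σ (Pi1 p) := by rw [hp1]; exact he1'.symm
        have hq2 : q.2 = τ (Pi2 p) := by rw [h2, hq1, hp1, hp2, ← hfg]
        exact Prod.ext hq1 hq2
    rw [hgoal]
    apply hSA.2.1
    have himg : (fun e : SE × TE => σ e.1) '' (⋃₀ (Subtype.val '' z)) =
        σ '' (Prod.fst '' (⋃₀ (Subtype.val '' z))) := (Set.image_image _ _ _).symm
    rw [himg]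
    exact hσmap.1.1 _ hU.1.2.1
  · -- Part 2: the bipullback property
    intro X0 EX SX hXiso x y hx hfx hy hfy hsym
    obtain ⟨Ssub, hSsubSS, hSsubI, hSsubNeg, hSthin⟩ := hSsub
    obtain ⟨Tsub, hTsubST, hTsubI, hTsubNeg, hTthin⟩ := hTsub
    have hsymP : ∀ w, Config EX w →
        pairSet (fun b => σ (x b)) (fun b => τ (y b)) w ∈ SA := by
      intro w hw
      have h := hsym w hw
      rwa [pairSet_eq_setOf] at h
    have key := key_lemma hSS hpS hST hpT hSA hpA hSsubSS hSsubI hSsubNeg hSthin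
      hTsubST hTsubI hTsubNeg hTthin hσmap hσr hσfam hτmap hτr hτfam hx hy hsymP
    have hex : ∀ w, Config EX w → ∃ ΦΨ : Rel2 SE × Rel2 TE,
        MInv Ssub Tsub x y σ τ w ΦΨ.1 ΦΨ.2 := by
      intro w hw
      obtain ⟨Φ, Ψ, h⟩ := (key w hw).1
      exact ⟨(Φ, Ψ), h⟩
    choose F hF using hex
    have hdc : ∀ a : X0, Config EX {b | EX.le b a} := fun a => config_downset EX a
    have hself : ∀ a : X0, a ∈ {b | EX.le b a} := fun a => mem_downset_self EX a
    have hΦSS : ∀ w (hw : Config EX w), (F w hw).1 ∈ SS := fun w hw => hSsubSS (hF w hw).1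
    have hΨST : ∀ w (hw : Config EX w), (F w hw).2 ∈ ST := fun w hw => hTsubST (hF w hw).2.1
    have hΦbij : ∀ w (hw : Config EX w), relBij (F w hw).1 :=
      fun w hw => (hSS.1 _ (hΦSS w hw)).1
    have hΨbij : ∀ w (hw : Config EX w), relBij (F w hw).2 :=
      fun w hw => (hST.1 _ (hΨST w hw)).1
    have hx'ex : ∀ a : X0, ∃ s, (x a, s) ∈ (F _ (hdc a)).1 := by
      intro a
      apply mem_rdom.1
      rw [(hF _ (hdc a)).2.2.1]
      exact ⟨a, hself a, rfl⟩
    have hy'ex : ∀ a : X0, ∃ t, (y a, t) ∈ (F _ (hdc a)).2 := by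
      intro a
      apply mem_rdom.1
      rw [(hF _ (hdc a)).2.2.2.1]
      exact ⟨a, hself a, rfl⟩
    choose x' hx'spec using hx'ex
    choose y' hy'spec using hy'ex
    -- coherence of the choices over all configurations
    have hcoh : ∀ w (hw : Config EX w), ∀ a ∈ w,
        (x a, x' a) ∈ (F w hw).1 ∧ (y a, y' a) ∈ (F w hw).2 := by
      intro w hw a ha
      have hsubw : {b | EX.le b a} ⊆ w := downset_subset_config hw ha
      have hres := minv_restrict hSsubI hTsubI hx hy (hdc a) hsubw (hF w hw)
      obtain ⟨h1, h2⟩ := (key _ (hdc a)).2 _ _ _ _ hres (hF _ (hdc a))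
      constructor
      · have hmem := hx'spec a
        rw [← h1] at hmem
        exact hmem.1
      · have hmem := hy'spec a
        rw [← h2] at hmem
        exact hmem.1
    have hmid : ∀ a, σ (x' a) = τ (y' a) := by
      intro a
      obtain ⟨s, t, hs, ht, hst⟩ := (hF _ (hdc a)).2.2.2.2 a (hself a)
      have h1 : x' a = s := relBij_right_unique (hΦbij _ (hdc a)) (hx'spec a) hs
      have h2 : y' a = t := relBij_right_unique (hΨbij _ (hdc a)) (hy'spec a) ht
      rw [h1, h2, hst]
    have hΦpair : ∀ w (hw : Config EX w), (F w hw).1 = pairSet x x' w := by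
      intro w hw
      ext ⟨u, v⟩
      constructor
      · intro hp
        have hu : u ∈ rdom (F w hw).1 := ⟨(u, v), hp, rfl⟩
        rw [(hF w hw).2.2.1] at hu
        obtain ⟨c, hc, rfl⟩ := hu
        have hv : v = x' c := relBij_right_unique (hΦbij w hw) hp ((hcoh w hw c hc).1)
        rw [hv]
        exact mem_pairSet' hc
      · intro hp
        obtain ⟨c, hc, hce⟩ := mem_pairSet.1 hp
        rw [← hce]
        exact (hcoh w hw c hc).1
    have hΨpair : ∀ w (hw : Config EX w), (F w hw).2 = pairSet y y' w := by
      intro w hw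
      ext ⟨u, v⟩
      constructor
      · intro hp
        have hu : u ∈ rdom (F w hw).2 := ⟨(u, v), hp, rfl⟩
        rw [(hF w hw).2.2.2.1] at hu
        obtain ⟨c, hc, rfl⟩ := hu
        have hv : v = y' c := relBij_right_unique (hΨbij w hw) hp ((hcoh w hw c hc).2)
        rw [hv]
        exact mem_pairSet' hc
      · intro hp
        obtain ⟨c, hc, hce⟩ := mem_pairSet.1 hp
        rw [← hce]
        exact (hcoh w hw c hc).2
    have hx'inj : ∀ w, Config EX w → ∀ a ∈ w, ∀ b ∈ w, x' a = x' b → a = b := by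
      intro w hw a ha b hb he
      have h1 := (hcoh w hw a ha).1
      have h2 := (hcoh w hw b hb).1
      rw [he] at h1
      have : x a = x b := relBij_left_unique (hΦbij w hw) h1 h2
      exact hx.2 w hw a ha b hb this
    have hy'inj : ∀ w, Config EX w → ∀ a ∈ w, ∀ b ∈ w, y' a = y' b → a = b := by
      intro w hw a ha b hb he
      have h1 := (hcoh w hw a ha).2
      have h2 := (hcoh w hw b hb).2
      rw [he] at h1
      have : y a = y b := relBij_left_unique (hΨbij w hw) h1 h2
      exact hy.2 w hw a ha b hb this
    have hx'cfg : ∀ w (hw : Config EX w), Config S.toES (x' '' w) := by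
      intro w hw
      have : x' '' w = rran (F w hw).1 := by rw [hΦpair w hw, rran_pairSet]
      rw [this]
      exact (hSS.1 _ (hΦSS w hw)).2.2
    have hy'cfg : ∀ w (hw : Config EX w), Config T.toES (y' '' w) := by
      intro w hw
      have : y' '' w = rran (F w hw).2 := by rw [hΨpair w hw, rran_pairSet]
      rw [this]
      exact (hST.1 _ (hΨST w hw)).2.2
    -- the straightened graphs are members of the pullback family
    have hθ'Fam : ∀ w, Config EX w → pairSet x' y' w ∈ PbFam S.toES T.toES σ τ := by
      intro w hw
      have hfin := config_finite hw
      have hmemiff : ∀ z ⊆ w, ∀ c ∈ w, ((x' c, y' c) ∈ pairSet x' y' z ↔ c ∈ z) := by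
        intro z hzw c hc
        constructor
        · intro hm
          obtain ⟨d, hd, hde⟩ := mem_pairSet.1 hm
          have : x' d = x' c := congrArg Prod.fst hde
          have hdc' : d = c := hx'inj w hw d (hzw hd) c hc this
          rw [← hdc']
          exact hd
        · intro hm
          exact mem_pairSet' hm
      refine ⟨⟨hfin.image _, ?_, ?_, ?_, ?_, ?_⟩, ?_⟩
      · rw [fst_pairSet]
        exact hx'cfg w hw
      · rw [snd_pairSet]
        exact hy'cfg w hw
      · intro p hp q hq hfst
        obtain ⟨a, ha, hae⟩ := mem_pairSet.1 hp
        obtain ⟨b, hb, hbe⟩ := mem_pairSet.1 hq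
        have h1 : x' a = p.1 := by rw [← hae]
        have h2 : x' b = q.1 := by rw [← hbe]
        have hab : a = b := hx'inj w hw a ha b hb (by rw [h1, h2, hfst])
        rw [← hae, ← hbe, hab]
      · intro p hp q hq hsnd
        obtain ⟨a, ha, hae⟩ := mem_pairSet.1 hp
        obtain ⟨b, hb, hbe⟩ := mem_pairSet.1 hq
        have h1 : y' a = p.2 := by rw [← hae]
        have h2 : y' b = q.2 := by rw [← hbe]
        have hab : a = b := hy'inj w hw a ha b hb (by rw [h1, h2, hsnd])
        rw [← hae, ← hbe, hab]
      · intro p hp q hq hpq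
        obtain ⟨a, ha, hae⟩ := mem_pairSet.1 hp
        obtain ⟨b, hb, hbe⟩ := mem_pairSet.1 hq
        have hab : a ≠ b := by
          intro h
          rw [h] at hae
          exact hpq (by rw [← hae, ← hbe])
        obtain ⟨z, hzw, hzc, hziff⟩ := sep_config hw ha hb hab
        refine ⟨pairSet x' y' z, pairSet_mono hzw, ?_, ?_, ?_⟩
        · rw [fst_pairSet]
          exact hx'cfg z hzc
        · rw [snd_pairSet]
          exact hy'cfg z hzc
        · rw [← hae, ← hbe]
          rw [hmemiff z hzw a ha, hmemiff z hzw b hb]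
          exact hziff
      · intro p hp
        obtain ⟨c, hc, hce⟩ := mem_pairSet.1 hp
        have h1 : x' c = p.1 := congrArg Prod.fst hce
        have h2 : y' c = p.2 := congrArg Prod.snd hce
        rw [← h1, ← h2]
        exact hmid c
    have hprime : ∀ a : X0, IsPrime (PbFam S.toES T.toES σ τ)
        (FamPrime (PbFam S.toES T.toES σ τ) (pairSet x' y' {b | EX.le b a})
          (x' a, y' a)) :=
      fun a => ⟨_, hθ'Fam _ (hdc a), (x' a, y' a), mem_pairSet' (hself a), rfl⟩
    -- the uniqueness clause, valid for any two candidate mediating maps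
    have huniqcl : ∀ h1 h2 : X0 → {p // IsPrime (PbFam S.toES T.toES σ τ) p},
        IsMap EX P h1 → IsMap EX P h2 →
        SymMaps EX SS (Pi1 ∘ h1) x → SymMaps EX SS (Pi1 ∘ h2) x →
        SymMaps EX ST (Pi2 ∘ h1) y → SymMaps EX ST (Pi2 ∘ h2) y →
        SymMaps EX (famP S.toES T.toES σ τ SS ST P Pi1 Pi2) h1 h2 := by
      intro h1 h2 hm1 hm2 hs1 hs2 ht1 ht2
      intro w hw
      have e0 : {p | ∃ a ∈ w, p = (h1 a, h2 a)} = pairSet h1 h2 w :=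
        pairSet_eq_setOf _ _ _
      rw [e0]
      have hcompS : pairSet (fun a => Pi1 (h1 a)) (fun a => Pi1 (h2 a)) w ∈ SS := by
        have m1 : pairSet (fun a => Pi1 (h1 a)) x w ∈ SS := by
          have h := hs1 w hw
          rwa [pairSet_eq_setOf] at h
        have m2 : pairSet (fun a => Pi1 (h2 a)) x w ∈ SS := by
          have h := hs2 w hw
          rwa [pairSet_eq_setOf] at h
        have m2' : pairSet x (fun a => Pi1 (h2 a)) w ∈ SS := by
          rw [← relInv_pairSet]
          exact hSS.2.2.1 _ m2
        have hcc : relComp (pairSet (fun a => Pi1 (h1 a)) x w)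
            (pairSet x (fun a => Pi1 (h2 a)) w) ∈ SS := by
          apply hSS.2.2.2.1 _ m1 _ m2'
          rw [rran_pairSet, rdom_pairSet]
        rwa [relComp_pairSet_pairSet (fun b hb c hc h => hx.2 w hw b hb c hc h)] at hcc
      have hcompT : pairSet (fun a => Pi2 (h1 a)) (fun a => Pi2 (h2 a)) w ∈ ST := by
        have m1 : pairSet (fun a => Pi2 (h1 a)) y w ∈ ST := by
          have h := ht1 w hw
          rwa [pairSet_eq_setOf] at h
        have m2 : pairSet (fun a => Pi2 (h2 a)) y w ∈ ST := by
          have h := ht2 w hw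
          rwa [pairSet_eq_setOf] at h
        have m2' : pairSet y (fun a => Pi2 (h2 a)) w ∈ ST := by
          rw [← relInv_pairSet]
          exact hST.2.2.1 _ m2
        have hcc : relComp (pairSet (fun a => Pi2 (h1 a)) y w)
            (pairSet y (fun a => Pi2 (h2 a)) w) ∈ ST := by
          apply hST.2.2.2.1 _ m1 _ m2'
          rw [rran_pairSet, rdom_pairSet]
        rwa [relComp_pairSet_pairSet (fun b hb c hc h => hy.2 w hw b hb c hc h)] at hcc
      refine ⟨?_, ?_, ?_, ?_, ?_⟩
      · -- relBij
        intro p hp q hq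
        obtain ⟨a, ha, hae⟩ := mem_pairSet.1 hp
        obtain ⟨b, hb, hbe⟩ := mem_pairSet.1 hq
        rw [← hae, ← hbe]
        constructor
        · intro h
          have : a = b := hm1.2 w hw a ha b hb h
          rw [this]
        · intro h
          have : a = b := hm2.2 w hw a ha b hb h
          rw [this]
      · rw [rdom_pairSet]
        exact hm1.1 w hw
      · rw [rran_pairSet]
        exact hm2.1 w hw
      · rw [relMap_pairSet]
        exact hcompS
      · rw [relMap_pairSet]
        exact hcompT
    -- properties of the canonical mediating map
    have hbig : ∀ hfun : X0 → {p // IsPrime (PbFam S.toES T.toES σ τ) p},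
        (∀ a, (hfun a).1 = FamPrime (PbFam S.toES T.toES σ τ)
          (pairSet x' y' {b | EX.le b a}) (x' a, y' a)) →
        IsMap EX P hfun ∧ FamPres SX (famP S.toES T.toES σ τ SS ST P Pi1 Pi2) hfun ∧
        SymMaps EX SS (Pi1 ∘ hfun) x ∧ SymMaps EX ST (Pi2 ∘ hfun) y := by
      intro hfun hfdef
      have hftop : ∀ a, PrRep (PbFam S.toES T.toES σ τ) (hfun a).1 (x' a, y' a) :=
        fun a => ⟨_, hθ'Fam _ (hdc a), mem_pairSet' (hself a), hfdef a⟩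
      have hPi1f : ∀ a, Pi1 (hfun a) = x' a := fun a => (hPi _ _ (hftop a)).1
      have hPi2f : ∀ a, Pi2 (hfun a) = y' a := fun a => (hPi _ _ (hftop a)).2
      have htransf : ∀ w (hw : Config EX w), ∀ a ∈ w, (hfun a).1 =
          FamPrime (PbFam S.toES T.toES σ τ) (pairSet x' y' w) (x' a, y' a) := by
        intro w hw a ha
        rw [hfdef a]
        exact famPrime_trans (hθ'Fam _ (hdc a)) (hθ'Fam w hw)
          (pairSet_mono (downset_subset_config hw ha)) (mem_pairSet' (hself a))
      have hUnionf : ∀ w (hw : Config EX w),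
          ⋃₀ (Subtype.val '' (hfun '' w)) = pairSet x' y' w := by
        intro w hw
        apply Set.Subset.antisymm
        · rintro e ⟨Y, hY, heY⟩
          obtain ⟨p, hp, rfl⟩ := hY
          obtain ⟨a, ha, rfl⟩ := hp
          rw [htransf w hw a ha] at heY
          exact famPrime_subset heY
        · intro e he
          obtain ⟨b, hb, hbe⟩ := mem_pairSet.1 he
          refine ⟨(hfun b).1, ⟨hfun b, ⟨b, hb, rfl⟩, rfl⟩, ?_⟩
          rw [hfdef b, ← hbe]
          exact mem_famPrime_self (mem_pairSet' (hself b))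
      have hinjf : ∀ w, Config EX w → ∀ a ∈ w, ∀ b ∈ w, hfun a = hfun b → a = b := by
        intro w hw a ha b hb hab
        have hv : (hfun a).1 = (hfun b).1 := congrArg Subtype.val hab
        have h2 : (hfun a).1 = FamPrime (PbFam S.toES T.toES σ τ)
            (pairSet x' y' {b' | EX.le b' b}) (x' b, y' b) := by
          rw [hv]
          exact hfdef b
        have htop := pb_top_unique (hvalFam (hfun a)) (hθ'Fam _ (hdc a))
          (hθ'Fam _ (hdc b)) (mem_pairSet' (hself a)) (mem_pairSet' (hself b))
          (hfdef a) h2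
        have : x' a = x' b := congrArg Prod.fst htop
        exact hx'inj w hw a ha b hb this
      have hmapP : IsMap EX P hfun := by
        constructor
        · intro w hw
          constructor
          · apply (hcon _).2
            refine ⟨(config_finite hw).image _, ?_⟩
            rw [hUnionf w hw]
            exact hθ'Fam w hw
          · intro p hp q hq
            obtain ⟨b₀, hb₀, rfl⟩ := hp
            have hql : q.1 ⊆ (hfun b₀).1 := (hle q (hfun b₀)).1 hq
            have hfw : (hfun b₀).1 ⊆ pairSet x' y' w := by
              rw [htransf w hw b₀ hb₀]
              exact famPrime_subset
            have hqw : q.1 ⊆ pairSet x' y' w := hql.trans hfw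
            obtain ⟨x₀, hx₀, e, he, heq⟩ := q.2
            have hq' : q.1 = FamPrime (PbFam S.toES T.toES σ τ)
                (pairSet x' y' w) e :=
              pb_prime_eq_of_subset hx₀ he heq (hvalFam q) (hθ'Fam w hw) hqw
            have heq1 : e ∈ q.1 := heq ▸ mem_famPrime_self he
            obtain ⟨b, hb, hbe⟩ := mem_pairSet.1 (hqw heq1)
            have hqb : q = hfun b := by
              apply Subtype.ext
              rw [hq', ← hbe, ← htransf w hw b hb]
            rw [hqb]
            exact ⟨b, hb, rfl⟩
        · exact hinjf
      have hsymm1 : SymMaps EX SS (Pi1 ∘ hfun) x := by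
        intro w hw
        rw [pairSet_eq_setOf]
        have he : pairSet (Pi1 ∘ hfun) x w = pairSet x' x w :=
          pairSet_congr (fun a _ => hPi1f a) (fun a _ => rfl)
        rw [he, ← relInv_pairSet]
        apply hSS.2.2.1
        rw [← hΦpair w hw]
        exact hΦSS w hw
      have hsymm2 : SymMaps EX ST (Pi2 ∘ hfun) y := by
        intro w hw
        rw [pairSet_eq_setOf]
        have he : pairSet (Pi2 ∘ hfun) y w = pairSet y' y w :=
          pairSet_congr (fun a _ => hPi2f a) (fun a _ => rfl)
        rw [he, ← relInv_pairSet]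
        apply hST.2.2.1
        rw [← hΨpair w hw]
        exact hΨST w hw
      refine ⟨hmapP, ?_, hsymm1, hsymm2⟩
      -- FamPres
      intro Θ hΘ
      obtain ⟨hΘbij, hΘdom, hΘran⟩ := hXiso.1 Θ hΘ
      have hmemdom : ∀ p : X0 × X0, p ∈ Θ → p.1 ∈ rdom Θ := fun p hp => ⟨p, hp, rfl⟩
      have hmemran : ∀ p : X0 × X0, p ∈ Θ → p.2 ∈ rran Θ := fun p hp => ⟨p, hp, rfl⟩
      have ePi1 : relMap Pi1 (relMap hfun Θ) = relMap2 x' x' Θ := by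
        ext ⟨u, v⟩
        constructor
        · rintro ⟨q, hq, hqe⟩
          obtain ⟨⟨a, b⟩, hab, habe⟩ := mem_relMap.1 hq
          rw [← habe] at hqe
          refine ⟨(a, b), hab, ?_⟩
          rw [← hqe]
          show (x' a, x' b) = (Pi1 (hfun a), Pi1 (hfun b))
          rw [hPi1f a, hPi1f b]
        · rintro ⟨⟨a, b⟩, hab, habe⟩
          refine ⟨(hfun a, hfun b), mem_relMap_of_mem hab, ?_⟩
          rw [← habe]
          show (Pi1 (hfun a), Pi1 (hfun b)) = (x' a, x' b)
          rw [hPi1f a, hPi1f b]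
      have ePi2 : relMap Pi2 (relMap hfun Θ) = relMap2 y' y' Θ := by
        ext ⟨u, v⟩
        constructor
        · rintro ⟨q, hq, hqe⟩
          obtain ⟨⟨a, b⟩, hab, habe⟩ := mem_relMap.1 hq
          rw [← habe] at hqe
          refine ⟨(a, b), hab, ?_⟩
          rw [← hqe]
          show (y' a, y' b) = (Pi2 (hfun a), Pi2 (hfun b))
          rw [hPi2f a, hPi2f b]
        · rintro ⟨⟨a, b⟩, hab, habe⟩
          refine ⟨(hfun a, hfun b), mem_relMap_of_mem hab, ?_⟩
          rw [← habe]
          show (Pi2 (hfun a), Pi2 (hfun b)) = (y' a, y' b)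
          rw [hPi2f a, hPi2f b]
      have hSSmem : relMap2 x' x' Θ ∈ SS := by
        have m2 : relMap x Θ ∈ SS := hfx Θ hΘ
        have m3 : pairSet x x' (rran Θ) ∈ SS := by
          rw [← hΦpair _ hΘran]
          exact hΦSS _ hΘran
        have c1 : relComp (relMap x Θ) (pairSet x x' (rran Θ)) ∈ SS := by
          apply hSS.2.2.2.1 _ m2 _ m3
          rw [rran_relMap, rdom_pairSet]
        have e2 : relComp (relMap x Θ) (pairSet x x' (rran Θ)) = relMap2 x x' Θ := by
          rw [relMap_eq_relMap2]
          exact relComp_relMap2_pairSet hmemran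
            (fun b hb c hc h => hx.2 _ hΘran b hb c hc h)
        rw [e2] at c1
        have m1 : pairSet x' x (rdom Θ) ∈ SS := by
          rw [← relInv_pairSet]
          apply hSS.2.2.1
          rw [← hΦpair _ hΘdom]
          exact hΦSS _ hΘdom
        have c2 : relComp (pairSet x' x (rdom Θ)) (relMap2 x x' Θ) ∈ SS := by
          apply hSS.2.2.2.1 _ m1 _ c1
          rw [rran_pairSet, rdom_relMap2]
        have e3 : relComp (pairSet x' x (rdom Θ)) (relMap2 x x' Θ) =
            relMap2 x' x' Θ :=
          relComp_pairSet_relMap2 hmemdom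
            (fun b hb c hc h => hx.2 _ hΘdom b hb c hc h)
        rwa [e3] at c2
      have hSTmem : relMap2 y' y' Θ ∈ ST := by
        have m2 : relMap y Θ ∈ ST := hfy Θ hΘ
        have m3 : pairSet y y' (rran Θ) ∈ ST := by
          rw [← hΨpair _ hΘran]
          exact hΨST _ hΘran
        have c1 : relComp (relMap y Θ) (pairSet y y' (rran Θ)) ∈ ST := by
          apply hST.2.2.2.1 _ m2 _ m3
          rw [rran_relMap, rdom_pairSet]
        have e2 : relComp (relMap y Θ) (pairSet y y' (rran Θ)) = relMap2 y y' Θ := by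
          rw [relMap_eq_relMap2]
          exact relComp_relMap2_pairSet hmemran
            (fun b hb c hc h => hy.2 _ hΘran b hb c hc h)
        rw [e2] at c1
        have m1 : pairSet y' y (rdom Θ) ∈ ST := by
          rw [← relInv_pairSet]
          apply hST.2.2.1
          rw [← hΨpair _ hΘdom]
          exact hΨST _ hΘdom
        have c2 : relComp (pairSet y' y (rdom Θ)) (relMap2 y y' Θ) ∈ ST := by
          apply hST.2.2.2.1 _ m1 _ c1
          rw [rran_pairSet, rdom_relMap2]
        have e3 : relComp (pairSet y' y (rdom Θ)) (relMap2 y y' Θ) =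
            relMap2 y' y' Θ :=
          relComp_pairSet_relMap2 hmemdom
            (fun b hb c hc h => hy.2 _ hΘdom b hb c hc h)
        rwa [e3] at c2
      refine ⟨?_, ?_, ?_, ?_, ?_⟩
      · -- relBij of relMap hfun Θ
        intro p hp q hq
        obtain ⟨⟨a, b⟩, hab, habe⟩ := mem_relMap.1 hp
        obtain ⟨⟨a', b'⟩, hab', habe'⟩ := mem_relMap.1 hq
        rw [← habe, ← habe']
        constructor
        · intro h
          have : a = a' := hinjf _ hΘdom a (hmemdom _ hab) a' (hmemdom _ hab') h
          have hbb : b = b' := (hΘbij (a, b) hab (a', b') hab').1 this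
          rw [hbb]
        · intro h
          have : b = b' := hinjf _ hΘran b (hmemran _ hab) b' (hmemran _ hab') h
          have haa : a = a' := (hΘbij (a, b) hab (a', b') hab').2 this
          rw [haa]
      · rw [rdom_relMap]
        exact hmapP.1 _ hΘdom
      · rw [rran_relMap]
        exact hmapP.1 _ hΘran
      · rw [ePi1]
        exact hSSmem
      · rw [ePi2]
        exact hSTmem
    -- assemble
    obtain ⟨hmapP, hfamP, hsymm1, hsymm2⟩ :=
      hbig (fun a => ⟨_, hprime a⟩) (fun a => rfl)
    refine ⟨fun a => ⟨_, hprime a⟩, hmapP, hfamP, hsymm1, hsymm2, ?_⟩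
    intro h' hm' _ hs1' hs2'
    exact huniqcl _ h' hmapP hm' hsymm1 hs1' hsymm2 hs2'
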